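/- arXiv:1810.04393 — 7 statements merged into one kernel-verified Lean document; each statement's English description precedes it below -/
import Mathlib

section
/- Let 1 < p < ∞ and define u : ℝ → ℝ by u(x) = −1 for x < −1, u(x) = x for −1 ≤ x ≤ 1, and u(x) = 1 for x > 1, and let g : ℝ → ℝ be the indicator function of the interval [−1,1]. Then u(x) − u(y) = ∫_y^x g(t) dt for all y ≤ x, ∫_ℝ |g(t)|^p dt = 2, the Hölder ratio of u at the points 1 and −1 equals 2^{1/p} = (∫_ℝ |g|^p)^{1/p}, and for every x ≠ y the (1−1/p)-Hölder ratio of u at x, y is at most 2^{1/p}. Hence equality holds in the one-dimensional Morrey inequality with constant 1, and the sharp constant in one dimension is 1. -/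
/-!
`u` is the clamp `max (-1) (min 1 x)` and `g` its a.e. derivative, so the fundamental theorem of
calculus reduces to computing the length of `[y, x] ∩ [-1, 1]`. The Hölder bound interpolates
the two trivial bounds `|u x - u y| ≤ |x - y|` (1-Lipschitz) and `|u x - u y| ≤ 2` (oscillation):
`min d 2 ≤ 2 ^ (1/p) * d ^ (1 - 1/p)`, with equality at `d = 2`, attained by `x = 1, y = -1`.
-/

open MeasureTheory Set

theorem ite_lt_ite_le_eq_max_min {a b : ℝ} (hab : a ≤ b) (x : ℝ) :
    (if x < a then a else if x ≤ b then x else b) = max a (min b x) := by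
  split_ifs <;> simp only [max_def, min_def] <;> split_ifs <;> linarith

theorem intervalIntegral_indicator_Icc_one {a b x y : ℝ} (hyx : y ≤ x) :
    ∫ t in y..x, (Icc a b).indicator 1 t = max (min b x - max a y) 0 := by
  have hae : (Icc a b ∩ Ioc y x : Set ℝ) =ᵐ[volume] Icc (max a y) (min b x) := by
    rw [← Icc_inter_Icc]
    exact ae_eq_set_inter (ae_eq_refl _) Ioc_ae_eq_Icc
  rw [intervalIntegral.integral_of_le hyx, integral_indicator_one measurableSet_Icc,
    measureReal_restrict_apply measurableSet_Icc, measureReal_congr hae, Real.volume_real_Icc]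

theorem max_min_sub_max_min_eq {a b x y : ℝ} (hyx : y ≤ x) :
    max a (min b x) - max a (min b y) = max (min b x - max a y) 0 := by
  simp only [max_def, min_def]
  split_ifs <;> linarith

theorem abs_max_min_sub_max_min_le {a b : ℝ} (hab : a ≤ b) (x y : ℝ) :
    |max a (min b x) - max a (min b y)| ≤ min |x - y| (b - a) := by
  refine le_min ?_ (abs_sub_le_of_le_of_le ?_ ?_ ?_ ?_)
  · simpa only [Set.coe_projIcc] using Set.abs_projIcc_sub_projIcc hab (c := x) (d := y)
  all_goals simp [hab]

theorem min_le_rpow_mul_rpow {d M θ : ℝ} (hd : 0 ≤ d) (hM : 0 ≤ M) (hθ₀ : 0 ≤ θ) (hθ₁ : θ ≤ 1) :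
    min d M ≤ M ^ θ * d ^ (1 - θ) := by
  rcases le_total d M with h | h
  · calc min d M = d ^ θ * d ^ (1 - θ) := by
          rw [min_eq_left h, ← Real.rpow_add' hd (by simp), add_sub_cancel, Real.rpow_one]
      _ ≤ M ^ θ * d ^ (1 - θ) := by gcongr
  · calc min d M = M ^ θ * M ^ (1 - θ) := by
          rw [min_eq_right h, ← Real.rpow_add' hM (by simp), add_sub_cancel, Real.rpow_one]
      _ ≤ M ^ θ * d ^ (1 - θ) := by gcongr

theorem abs_indicator_one_rpow {p : ℝ} (hp : p ≠ 0) (s : Set ℝ) (t : ℝ) :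
    |s.indicator (1 : ℝ → ℝ) t| ^ p = s.indicator 1 t := by
  by_cases h : t ∈ s <;> simp [h, Real.zero_rpow hp]

theorem abs_max_min_sub_div_rpow_le {a b p : ℝ} (hab : a ≤ b) (hp : 1 ≤ p) {x y : ℝ}
    (hxy : x ≠ y) :
    |max a (min b x) - max a (min b y)| / |x - y| ^ (1 - 1 / p) ≤ (b - a) ^ (1 / p) := by
  have hd : 0 < |x - y| := abs_pos.2 (sub_ne_zero.2 hxy)
  rw [div_le_iff₀ (Real.rpow_pos_of_pos hd _)]
  exact (abs_max_min_sub_max_min_le hab x y).trans <|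
    min_le_rpow_mul_rpow hd.le (sub_nonneg.2 hab) (by positivity)
      ((div_le_one₀ (by linarith)).2 hp)

/-- The explicit one-dimensional extremal: `u = -1` on `(-∞,-1)`, `u(x) = x` on `[-1,1]`,
`u = 1` on `(1,∞)`, with derivative `g = 𝟙_{[-1,1]}`.  It realizes equality in the
one-dimensional Morrey inequality with constant `1`, so the sharp constant is `1`. -/
theorem morrey_one_dim_extremal (p : ℝ) (hp : 1 < p)
    (u : ℝ → ℝ)
    (hu : u = fun x => if x < -1 then (-1 : ℝ) else if x ≤ 1 then x else 1)
    (g : ℝ → ℝ)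
    (hg : g = (Set.Icc (-1 : ℝ) 1).indicator fun _ => (1 : ℝ)) :
    (∀ x y : ℝ, y ≤ x → u x - u y = ∫ t in y..x, g t) ∧
    (∫ t, |g t| ^ p) = 2 ∧
    |u 1 - u (-1)| / |(1 : ℝ) - (-1)| ^ (1 - 1 / p) = 2 ^ (1 / p) ∧
    (∀ x y : ℝ, x ≠ y → |u x - u y| / |x - y| ^ (1 - 1 / p) ≤ 2 ^ (1 / p)) := by
  obtain rfl : u = fun x => max (-1) (min 1 x) :=
    hu.trans (funext (ite_lt_ite_le_eq_max_min (by norm_num)))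
  obtain rfl : g = (Icc (-1 : ℝ) 1).indicator 1 := hg
  refine ⟨fun x y hyx => ?_, ?_, ?_, fun x y hxy => ?_⟩
  · rw [max_min_sub_max_min_eq hyx, intervalIntegral_indicator_Icc_one hyx]
  · simp_rw [abs_indicator_one_rpow (by linarith : p ≠ 0)]
    rw [integral_indicator_one measurableSet_Icc, Real.volume_real_Icc]
    norm_num
  · norm_num
    rw [Real.rpow_sub two_pos, Real.rpow_one, div_div_cancel₀ (by positivity)]
  · simpa [one_add_one_eq_two] using
      abs_max_min_sub_div_rpow_le (by norm_num : (-1 : ℝ) ≤ 1) hp.le hxy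
end

section
/- Let 1 < p < ∞, let g : ℝ → ℝ be measurable with ∫_ℝ |g(t)|^p dt < ∞, and let u : ℝ → ℝ satisfy u(x) − u(y) = ∫_y^x g(t) dt for all y ≤ x. Suppose there exist y0 < x0 with |u(x0) − u(y0)| = (∫_ℝ |g(t)|^p dt)^{1/p} · |x0 − y0|^{1−1/p} (i.e. equality holds in the one-dimensional Morrey inequality, attained at x0, y0). Then g = 0 almost everywhere on ℝ \ (y0, x0) and g(t) = (u(x0) − u(y0))/(x0 − y0) for almost every t ∈ (y0, x0). -/
/-!
Let `s = (y0, x0)`, `L = x0 - y0` and `I = ∫ |g| ^ p`. The slope `c = (u x0 - u y0) / L` is the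
average of `g` over `s`, and equality in Morrey's inequality says `|c| ^ p = I / L`. Jensen's
inequality for `|·| ^ p` and `s ⊆ ℝ` give `|c| ^ p ≤ ⨍_s |g| ^ p ≤ I / L`, so both are equalities.
Since `|·| ^ p` is strictly convex, the first forces `g = c` a.e. on `s`; the second forces
`|g| ^ p`, hence `g`, to vanish a.e. off `s`.
-/

open MeasureTheory Set

theorem strictConvexOn_abs_rpow {p : ℝ} (hp : 1 < p) :
    StrictConvexOn ℝ univ fun x : ℝ => |x| ^ p := by
  refine ⟨convex_univ, fun x _ y _ hxy a b ha hb hab => ?_⟩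
  simp only [smul_eq_mul]
  rcases eq_or_ne |x| |y| with habs | habs
  · -- here strictness comes from the cancellation in `a * x + b * y`, not from `t ↦ t ^ p`
    have hxy' : x = -y := (abs_eq_abs.1 habs).resolve_left hxy
    have hy : y ≠ 0 := by rintro rfl; simp_all
    have hshrink : |a * x + b * y| < |y| := by
      rw [hxy', show a * -y + b * y = (b - a) * y by ring, abs_mul]
      refine mul_lt_of_lt_one_left (abs_pos.2 hy) (abs_lt.2 ⟨?_, ?_⟩) <;> linarith
    calc |a * x + b * y| ^ p < |y| ^ p :=
          Real.rpow_lt_rpow (abs_nonneg _) hshrink (by linarith)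
      _ = a * |x| ^ p + b * |y| ^ p := by rw [habs, ← add_mul, hab, one_mul]
  · calc |a * x + b * y| ^ p ≤ (a * |x| + b * |y|) ^ p := by
          gcongr
          calc |a * x + b * y| ≤ |a * x| + |b * y| := abs_add_le _ _
            _ = a * |x| + b * |y| := by rw [abs_mul, abs_mul, abs_of_pos ha, abs_of_pos hb]
      _ < a * |x| ^ p + b * |y| ^ p := by
          simpa only [smul_eq_mul] using
            (strictConvexOn_rpow hp).2 (abs_nonneg x) (abs_nonneg y) habs ha hb hab

section Average

variable {α : Type*} [MeasurableSpace α] {μ : Measure α} [IsFiniteMeasure μ] {p : ℝ} {f : α → ℝ}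

theorem abs_average_rpow_le_average_abs_rpow [NeZero μ] (hp : 1 < p) (hf : Integrable f μ)
    (hfp : Integrable (fun x => |f x| ^ p) μ) :
    |⨍ x, f x ∂μ| ^ p ≤ ⨍ x, |f x| ^ p ∂μ :=
  (strictConvexOn_abs_rpow hp).convexOn.map_average_le
    (continuous_abs.rpow_const fun _ => Or.inr (by linarith)).continuousOn isClosed_univ
    (by simp) hf hfp

theorem ae_eq_average_of_average_abs_rpow_le (hp : 1 < p) (hf : Integrable f μ)
    (hfp : Integrable (fun x => |f x| ^ p) μ) (h : ⨍ x, |f x| ^ p ∂μ ≤ |⨍ x, f x ∂μ| ^ p) :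
    f =ᵐ[μ] Function.const α (⨍ x, f x ∂μ) :=
  ((strictConvexOn_abs_rpow hp).ae_eq_const_or_map_average_lt
    (continuous_abs.rpow_const fun _ => Or.inr (by linarith)).continuousOn isClosed_univ
    (by simp) hf hfp).resolve_right h.not_gt

end Average

theorem integrableOn_of_integrable_abs_rpow {α : Type*} [MeasurableSpace α] {μ : Measure α}
    {p : ℝ} (hp : 1 ≤ p) {f : α → ℝ} (hf : AEStronglyMeasurable f μ)
    (hfp : Integrable (fun x => |f x| ^ p) μ) {s : Set α} (hs : μ s ≠ ⊤) :
    IntegrableOn f s μ := by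
  have hmem : MemLp f (ENNReal.ofReal p) μ := by
    refine (integrable_norm_rpow_iff hf (by simp; linarith) ENNReal.ofReal_ne_top).1 ?_
    simpa [ENNReal.toReal_ofReal (zero_le_one.trans hp)] using hfp
  have : IsFiniteMeasure (μ.restrict s) := ⟨by simpa using hs.lt_top⟩
  exact (hmem.restrict s).integrable (by simpa using hp)

theorem ae_notMem_imp_eq_zero_of_integral_le_setIntegral {α : Type*} [MeasurableSpace α]
    {μ : Measure α} {f : α → ℝ} {s : Set α} (hf0 : 0 ≤ f) (hf : Integrable f μ)
    (hs : MeasurableSet s) (h : ∫ x, f x ∂μ ≤ ∫ x in s, f x ∂μ) :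
    ∀ᵐ x ∂μ, x ∉ s → f x = 0 := by
  have hcompl : ∫ x in sᶜ, f x ∂μ = 0 :=
    le_antisymm (by linarith [integral_add_compl hs hf])
      (setIntegral_nonneg hs.compl fun x _ => hf0 x)
  rw [setIntegral_eq_zero_iff_of_nonneg_ae (.of_forall hf0) hf.integrableOn] at hcompl
  exact (ae_restrict_iff' hs.compl).1 hcompl

theorem abs_div_rpow_eq_of_abs_eq {p I L T : ℝ} (hp : 0 < p) (hI : 0 ≤ I) (hL : 0 < L)
    (h : |T| = I ^ (1 / p) * L ^ (1 - 1 / p)) : |T / L| ^ p = I / L := by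
  rw [abs_div, abs_of_pos hL, h, Real.div_rpow (by positivity) hL.le,
    Real.mul_rpow (by positivity) (by positivity), ← Real.rpow_mul hI, ← Real.rpow_mul hL.le,
    one_div_mul_cancel hp.ne', Real.rpow_one, sub_mul, one_div_mul_cancel hp.ne', one_mul,
    Real.rpow_sub hL, Real.rpow_one]
  field_simp

/-- Rigidity in the one-dimensional Morrey inequality: if equality is attained at a pair
`y0 < x0`, then the density `g` vanishes a.e. outside `(y0, x0)` and is a.e. equal to the
constant `(u x0 - u y0)/(x0 - y0)` on `(y0, x0)`. -/
theorem morrey_one_dim_equality_rigidity (p : ℝ) (hp : 1 < p)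
    (g : ℝ → ℝ) (hg : Measurable g)
    (hgp : Integrable (fun t => |g t| ^ p))
    (u : ℝ → ℝ)
    (hu : ∀ x y : ℝ, y ≤ x → u x - u y = ∫ t in y..x, g t)
    (x0 y0 : ℝ) (hlt : y0 < x0)
    (heq : |u x0 - u y0| = (∫ t, |g t| ^ p) ^ (1 / p) * |x0 - y0| ^ (1 - 1 / p)) :
    (∀ᵐ t : ℝ, t ∉ Set.Ioo y0 x0 → g t = 0) ∧
    (∀ᵐ t : ℝ, t ∈ Set.Ioo y0 x0 → g t = (u x0 - u y0) / (x0 - y0)) := by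
  set s := Ioo y0 x0
  have hL : 0 < x0 - y0 := sub_pos.2 hlt
  have hvol : volume.real s = x0 - y0 := Real.volume_real_Ioo_of_le hlt.le
  have : NeZero (volume.restrict s) := ⟨by simp [s, Measure.restrict_eq_zero, hlt]⟩
  have hgs : IntegrableOn g s :=
    integrableOn_of_integrable_abs_rpow hp.le hg.aestronglyMeasurable hgp measure_Ioo_lt_top.ne
  have hgps : IntegrableOn (fun t => |g t| ^ p) s := hgp.integrableOn
  have havg : ⨍ t in s, g t = (u x0 - u y0) / (x0 - y0) := by
    rw [setAverage_eq, hvol, hu x0 y0 hlt.le, intervalIntegral.integral_of_le hlt.le,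
      integral_Ioc_eq_integral_Ioo, smul_eq_mul, inv_mul_eq_div]
  have hpavg : ⨍ t in s, |g t| ^ p = (∫ t in s, |g t| ^ p) / (x0 - y0) := by
    rw [setAverage_eq, hvol, smul_eq_mul, inv_mul_eq_div]
  have hmorrey : |⨍ t in s, g t| ^ p = (∫ t, |g t| ^ p) / (x0 - y0) := by
    rw [havg]
    exact abs_div_rpow_eq_of_abs_eq (by linarith) (integral_nonneg fun _ => by positivity) hL
      (abs_of_pos hL ▸ heq)
  have hjensen := abs_average_rpow_le_average_abs_rpow hp hgs hgps
  have hrestrict : ∫ t in s, |g t| ^ p ≤ ∫ t, |g t| ^ p :=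
    setIntegral_le_integral hgp (.of_forall fun _ => by positivity)
  constructor
  · have houtside := ae_notMem_imp_eq_zero_of_integral_le_setIntegral
      (fun _ => by positivity) hgp measurableSet_Ioo
      ((div_le_div_iff_of_pos_right hL).1 (hmorrey ▸ hpavg ▸ hjensen))
    filter_upwards [houtside] with t ht hts
    simpa [(by linarith : p ≠ 0)] using ht hts
  · have hconst := ae_eq_average_of_average_abs_rpow_le hp hgs hgps
      (hmorrey ▸ hpavg ▸ div_le_div_of_nonneg_right hrestrict hL.le)
    rw [havg] at hconst
    exact (ae_restrict_iff' measurableSet_Ioo).1 hconst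
end

section
/- Let n ≥ 1, n < p < ∞, C_* > 0, and let x0, y0 ∈ ℝⁿ be distinct. Let u : ℝⁿ → ℝ be differentiable with ∫_{ℝⁿ} ‖∇u‖^p dx < ∞ and suppose |u(x0) − u(y0)|^p / ‖x0 − y0‖^{p−n} = C_*^p ∫_{ℝⁿ} ‖∇u‖^p dx. Let φ : ℝⁿ → ℝ be differentiable with ∫_{ℝⁿ} ‖∇φ‖^p dx < ∞ and suppose that for every t ∈ ℝ, |u(x0) − u(y0) + t(φ(x0) − φ(y0))|^p / ‖x0 − y0‖^{p−n} ≤ C_*^p ∫_{ℝⁿ} ‖∇u + t∇φ‖^p dx. Then the function x ↦ ‖∇u(x)‖^{p−2}⟨∇u(x), ∇φ(x)⟩ is integrable and C_*^p ∫_{ℝⁿ} ‖∇u‖^{p−2}⟨∇u, ∇φ⟩ dx = |u(x0) − u(y0)|^{p−2}(u(x0) − u(y0)) (φ(x0) − φ(y0)) / ‖x0 − y0‖^{p−n}. -/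
open MeasureTheory RealInnerProductSpace

/-! The function
`t ↦ Cs ^ p * ∫ ‖∇u + t • ∇φ‖ ^ p - |u x0 - u y0 + t * (φ x0 - φ y0)| ^ p / ‖x0 - y0‖ ^ (p - n)`
is nonnegative and vanishes at `t = 0`, so its derivative at `0` is zero. Since `p > 1`, both
terms are differentiable; the integral is differentiated under the integral sign, the
`t`-derivative of `‖∇u + t • ∇φ‖ ^ p` being dominated for `|t| ≤ 1` by `p * (‖∇u‖ + ‖∇φ‖) ^ p`,
which is integrable because `‖∇u‖ + ‖∇φ‖ ∈ Lᵖ`. Cancelling the common factor `p` in the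
vanishing derivative gives the identity. -/

section NormRpow

variable {E : Type*} [NormedAddCommGroup E] [InnerProductSpace ℝ E]

lemma hasDerivAt_norm_add_smul_rpow {p : ℝ} (hp : 1 < p) (v w : E) (t : ℝ) :
    HasDerivAt (fun s : ℝ => ‖v + s • w‖ ^ p)
      (p * (‖v + t • w‖ ^ (p - 2) * ⟪v + t • w, w⟫)) t := by
  have hline : HasDerivAt (fun s : ℝ => v + s • w) w t := by
    simpa using ((hasDerivAt_id t).smul_const w).const_add v
  refine ((hasFDerivAt_norm_rpow (v + t • w) hp).comp_hasDerivAt t hline).congr_deriv ?_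
  simp only [smul_apply, innerSL_apply_apply, smul_eq_mul]
  ring

lemma abs_norm_rpow_sub_two_mul_inner_le (p : ℝ) (v w : E) :
    |‖v‖ ^ (p - 2) * ⟪v, w⟫| ≤ ‖v‖ ^ (p - 1) * ‖w‖ := by
  rcases eq_or_ne v 0 with rfl | hv
  · simp only [inner_zero_left, mul_zero, abs_zero]
    positivity
  calc |‖v‖ ^ (p - 2) * ⟪v, w⟫| ≤ ‖v‖ ^ (p - 2) * (‖v‖ * ‖w‖) := by
        rw [abs_mul, abs_of_nonneg (by positivity)]
        gcongr
        exact abs_real_inner_le_norm v w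
    _ = ‖v‖ ^ (p - 1) * ‖w‖ := by
        rw [← mul_assoc, ← Real.rpow_add_one (norm_ne_zero_iff.mpr hv)]
        ring_nf

lemma abs_norm_add_smul_rpow_sub_two_mul_inner_le {p : ℝ} (hp : 1 ≤ p) (v w : E) {t : ℝ}
    (ht : |t| ≤ 1) :
    |‖v + t • w‖ ^ (p - 2) * ⟪v + t • w, w⟫| ≤ (‖v‖ + ‖w‖) ^ p := by
  have hsegment : ‖v + t • w‖ ≤ ‖v‖ + ‖w‖ :=
    calc ‖v + t • w‖ ≤ ‖v‖ + |t| * ‖w‖ := by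
          simpa [norm_smul] using norm_add_le v (t • w)
      _ ≤ ‖v‖ + ‖w‖ := by
          gcongr
          exact mul_le_of_le_one_left (norm_nonneg w) ht
  calc _ ≤ ‖v + t • w‖ ^ (p - 1) * ‖w‖ := abs_norm_rpow_sub_two_mul_inner_le p _ w
    _ ≤ (‖v‖ + ‖w‖) ^ (p - 1) * (‖v‖ + ‖w‖) := by
        gcongr
        exact le_add_of_nonneg_left (norm_nonneg v)
    _ = (‖v‖ + ‖w‖) ^ p := by
        rw [← Real.rpow_add_one' (by positivity) (by linarith)]
        ring_nf

end NormRpow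

lemma hasDerivAt_eq_of_le_of_eq {f g : ℝ → ℝ} {f' g' a : ℝ} (hle : ∀ t, f t ≤ g t)
    (heq : f a = g a) (hf : HasDerivAt f f' a) (hg : HasDerivAt g g' a) : f' = g' := by
  have hmin : IsLocalMin (g - f) a :=
    Filter.Eventually.of_forall fun t => by simpa [heq] using hle t
  exact (sub_eq_zero.1 (hmin.hasDerivAt_eq_zero (hg.sub hf))).symm

lemma measurable_gradient {F : Type*} [NormedAddCommGroup F] [InnerProductSpace ℝ F]
    [CompleteSpace F] [MeasurableSpace F] [BorelSpace F] (f : F → ℝ) :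
    Measurable (gradient f) :=
  (InnerProductSpace.toDual ℝ F).symm.continuous.measurable.comp (measurable_fderiv ℝ f)

section FirstVariation

variable {α E : Type*} [MeasurableSpace α] {μ : Measure α}

lemma memLp_ofReal_iff_integrable_norm_rpow [NormedAddCommGroup E] {p : ℝ} (hp : 0 < p)
    {G : α → E} (hG : AEStronglyMeasurable G μ) :
    MemLp G (.ofReal p) μ ↔ Integrable (fun x => ‖G x‖ ^ p) μ := by
  rw [← integrable_norm_rpow_iff hG (by simpa using hp) ENNReal.ofReal_ne_top,
    ENNReal.toReal_ofReal hp.le]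

variable [NormedAddCommGroup E] [InnerProductSpace ℝ E]

lemma hasDerivAt_integral_norm_add_smul_rpow {p : ℝ} (hp : 1 < p) {G H : α → E}
    (hG : MemLp G (.ofReal p) μ) (hH : MemLp H (.ofReal p) μ) :
    Integrable (fun x => ‖G x‖ ^ (p - 2) * ⟪G x, H x⟫) μ ∧
      HasDerivAt (fun t : ℝ => ∫ x, ‖G x + t • H x‖ ^ p ∂μ)
        (p * ∫ x, ‖G x‖ ^ (p - 2) * ⟪G x, H x⟫ ∂μ) 0 := by
  have hp0 : 0 < p := zero_lt_one.trans hp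
  have hmeas : ∀ t : ℝ, AEStronglyMeasurable (fun x => G x + t • H x) μ := fun t =>
    hG.1.add (hH.1.const_smul t)
  have hdom : Integrable (fun x => p * (‖G x‖ + ‖H x‖) ^ p) μ := by
    have hsum := hG.norm.add hH.norm
    rw [memLp_ofReal_iff_integrable_norm_rpow hp0 hsum.1] at hsum
    refine (hsum.const_mul p).congr ?_
    filter_upwards with x
    simp [abs_of_nonneg (add_nonneg (norm_nonneg (G x)) (norm_nonneg (H x)))]
  obtain ⟨hint, hderiv⟩ := hasDerivAt_integral_of_dominated_loc_of_deriv_le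
    (F' := fun t x => p * (‖G x + t • H x‖ ^ (p - 2) * ⟪G x + t • H x, H x⟫))
    (Metric.ball_mem_nhds 0 zero_lt_one)
    (Filter.Eventually.of_forall fun t =>
      ((hmeas t).norm.aemeasurable.pow_const p).aestronglyMeasurable)
    (by simpa using (memLp_ofReal_iff_integrable_norm_rpow hp0 hG.1).1 hG)
    (aestronglyMeasurable_const.mul
      (((hmeas 0).norm.aemeasurable.pow_const _).aestronglyMeasurable.mul ((hmeas 0).inner hH.1)))
    (Filter.Eventually.of_forall fun x t ht => by
      rw [norm_mul, Real.norm_eq_abs, abs_of_pos hp0, Real.norm_eq_abs]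
      gcongr
      refine abs_norm_add_smul_rpow_sub_two_mul_inner_le hp.le _ _ ?_
      simpa using (Metric.mem_ball.1 ht).le)
    hdom
    (Filter.Eventually.of_forall fun x t _ => hasDerivAt_norm_add_smul_rpow hp (G x) (H x) t)
  simp only [zero_smul, add_zero, integral_const_mul] at hint hderiv
  exact ⟨(hint.const_mul p⁻¹).congr (by filter_upwards with x; field_simp), hderiv⟩

end FirstVariation

theorem extremal_weak_pde_general (n : ℕ) (hn : 1 ≤ n) (p : ℝ) (hp : (n : ℝ) < p)
    (Cs : ℝ)
    (x0 y0 : EuclideanSpace ℝ (Fin n))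
    (u : EuclideanSpace ℝ (Fin n) → ℝ)
    (hui : Integrable (fun x => ‖gradient u x‖ ^ p))
    (hmax : |u x0 - u y0| ^ p / ‖x0 - y0‖ ^ (p - (n : ℝ)) =
      Cs ^ p * ∫ x, ‖gradient u x‖ ^ p)
    (φ : EuclideanSpace ℝ (Fin n) → ℝ)
    (hφi : Integrable (fun x => ‖gradient φ x‖ ^ p))
    (hineq : ∀ t : ℝ,
      |u x0 - u y0 + t * (φ x0 - φ y0)| ^ p / ‖x0 - y0‖ ^ (p - (n : ℝ)) ≤
        Cs ^ p * ∫ x, ‖gradient u x + t • gradient φ x‖ ^ p) :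
    Integrable (fun x => ‖gradient u x‖ ^ (p - 2) * ⟪gradient u x, gradient φ x⟫) ∧
    Cs ^ p * ∫ x, ‖gradient u x‖ ^ (p - 2) * ⟪gradient u x, gradient φ x⟫ =
      |u x0 - u y0| ^ (p - 2) * (u x0 - u y0) * (φ x0 - φ y0) /
        ‖x0 - y0‖ ^ (p - (n : ℝ)) := by
  have hp1 : 1 < p := lt_of_le_of_lt (by exact_mod_cast hn) hp
  have hp0 : 0 < p := zero_lt_one.trans hp1
  obtain ⟨hint, hvariation⟩ := hasDerivAt_integral_norm_add_smul_rpow hp1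
    ((memLp_ofReal_iff_integrable_norm_rpow hp0
      (measurable_gradient u).aestronglyMeasurable).2 hui)
    ((memLp_ofReal_iff_integrable_norm_rpow hp0
      (measurable_gradient φ).aestronglyMeasurable).2 hφi)
  have hpoint := (hasDerivAt_norm_add_smul_rpow hp1 (u x0 - u y0) (φ x0 - φ y0) 0).div_const
    (‖x0 - y0‖ ^ (p - (n : ℝ)))
  simp only [Real.norm_eq_abs, smul_eq_mul, zero_mul, add_zero, Real.inner_apply] at hpoint
  have hderiv_eq := hasDerivAt_eq_of_le_of_eq hineq (by simpa using hmax) hpoint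
    (hvariation.const_mul (Cs ^ p))
  refine ⟨hint, mul_left_cancel₀ hp0.ne' ?_⟩
  linear_combination -hderiv_eq

/-- If `u` is an extremal for Morrey's inequality whose Hölder ratio is maximized at
`x0 ≠ y0`, then `u` satisfies the weak Euler–Lagrange (p-Laplace) identity against any
admissible test function `φ`. -/
theorem extremal_weak_pde (n : ℕ) (hn : 1 ≤ n) (p : ℝ) (hp : (n : ℝ) < p)
    (Cs : ℝ) (hCs : 0 < Cs)
    (x0 y0 : EuclideanSpace ℝ (Fin n)) (hxy : x0 ≠ y0)
    (u : EuclideanSpace ℝ (Fin n) → ℝ) (hu : Differentiable ℝ u)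
    (hui : Integrable (fun x => ‖gradient u x‖ ^ p))
    (hmax : |u x0 - u y0| ^ p / ‖x0 - y0‖ ^ (p - (n : ℝ)) =
      Cs ^ p * ∫ x, ‖gradient u x‖ ^ p)
    (φ : EuclideanSpace ℝ (Fin n) → ℝ) (hφ : Differentiable ℝ φ)
    (hφi : Integrable (fun x => ‖gradient φ x‖ ^ p))
    (hineq : ∀ t : ℝ,
      |u x0 - u y0 + t * (φ x0 - φ y0)| ^ p / ‖x0 - y0‖ ^ (p - (n : ℝ)) ≤
        Cs ^ p * ∫ x, ‖gradient u x + t • gradient φ x‖ ^ p) :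
    Integrable (fun x => ‖gradient u x‖ ^ (p - 2) * ⟪gradient u x, gradient φ x⟫) ∧
    Cs ^ p * ∫ x, ‖gradient u x‖ ^ (p - 2) * ⟪gradient u x, gradient φ x⟫ =
      |u x0 - u y0| ^ (p - 2) * (u x0 - u y0) * (φ x0 - φ y0) /
        ‖x0 - y0‖ ^ (p - (n : ℝ)) :=
  extremal_weak_pde_general n hn p hp Cs x0 y0 u hui hmax φ hφi hineq
end

section
/- (Finite Chain Lemma) Let n ≥ 2, R > 0, and let x, y ∈ ℝⁿ with ‖x‖ ≥ 2R and ‖y‖ ≥ 2R. Then there exist m ∈ {1, …, 8} and points z_1, …, z_m ∈ ℝⁿ with ‖z_i‖ ≥ 2R for each i, such that, writing w_0 = x, w_i = z_i for 1 ≤ i ≤ m, and w_{m+1} = y: (1) ‖w_i − w_{i+1}‖ ≤ ‖x − y‖ for every 0 ≤ i ≤ m; and (2) for every 0 ≤ i ≤ m, the open ball of radius ‖w_i − w_{i+1}‖/2 centered at (w_i + w_{i+1})/2 is contained in ℝⁿ \ B_R(0), where B_R(0) is the open ball of radius R centered at the origin. -/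
/-!
Put `L = max ‖x‖ ‖y‖` and let `θ ≤ π` be the angle between `x` and `y`. The chain pushes `x`
radially out to the sphere of radius `L`, walks along the great circle towards `y` in four steps
of angle `θ / 4`, and comes radially back in to `y`.

By the triangle inequality at the midpoint, the ball with diameter `[a, b]` misses `B_R(0)` as soon
as `‖a - b‖ + 2R ≤ ‖a + b‖`. For a radial step this reduces to `R ≤ ‖x‖`; for an arc step of angle
`φ ≤ π / 4` on a sphere of radius `L ≥ 2R` it follows from `2 sin (φ / 2) + 1 ≤ 2 cos (φ / 2)`.
Radial steps together are no longer than `|‖x‖ - ‖y‖|`, and an arc step is at most half the chord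
of the whole arc, which is at most `2 ‖x - y‖ / L` by the triangle inequality through `x` and `y`.
-/

open Real InnerProductGeometry Module
open scoped RealInnerProductSpace

section Normed

variable {E : Type*} [NormedAddCommGroup E]

def IsChainLink (R d : ℝ) (a b : E) : Prop :=
  ‖a - b‖ ≤ d ∧ ‖a - b‖ + 2 * R ≤ ‖a + b‖

theorem IsChainLink.symm {R d : ℝ} {a b : E} (h : IsChainLink R d a b) :
    IsChainLink R d b a := by
  unfold IsChainLink at *
  rwa [norm_sub_rev, add_comm b]

theorem max_norm_sub_add_max_norm_sub_le (x y : E) :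
    (max ‖x‖ ‖y‖ - ‖x‖) + (max ‖x‖ ‖y‖ - ‖y‖) ≤ ‖x - y‖ := by
  have := abs_norm_sub_norm_le x y
  rw [abs_le] at this
  rcases le_total ‖x‖ ‖y‖ with h | h
  · rw [max_eq_right h]; linarith
  · rw [max_eq_left h]; linarith

variable [NormedSpace ℝ E]

theorem ball_midpoint_subset_compl_ball {R : ℝ} {a b : E} (h : ‖a - b‖ + 2 * R ≤ ‖a + b‖) :
    Metric.ball (((1 : ℝ) / 2) • (a + b)) (‖a - b‖ / 2) ⊆ (Metric.ball 0 R)ᶜ := by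
  intro z hz
  rw [Metric.mem_ball, dist_eq_norm] at hz
  have hmid : ‖((1 : ℝ) / 2) • (a + b)‖ = ‖a + b‖ / 2 := by
    rw [norm_smul]; norm_num; ring
  have := norm_sub_norm_le (((1 : ℝ) / 2) • (a + b)) z
  rw [norm_sub_rev] at this
  simp only [Set.mem_compl_iff, Metric.mem_ball, dist_zero_right, not_lt]
  linarith

theorem norm_sub_smul_inv_norm_smul {x : E} (hx : x ≠ 0) {L : ℝ} (hxL : ‖x‖ ≤ L) :
    ‖x - L • ‖x‖⁻¹ • x‖ = L - ‖x‖ := by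
  have hx' : 0 < ‖x‖ := norm_pos_iff.mpr hx
  have hLx : 1 ≤ L * ‖x‖⁻¹ := by rwa [← div_eq_mul_inv, one_le_div hx']
  have hx_eq : x - (L * ‖x‖⁻¹) • x = (1 - L * ‖x‖⁻¹) • x := by rw [sub_smul, one_smul]
  rw [smul_smul, hx_eq, norm_smul, Real.norm_eq_abs, abs_of_nonpos (by linarith)]
  field_simp
  ring

theorem norm_add_smul_inv_norm_smul {x : E} (hx : x ≠ 0) {L : ℝ} (hxL : ‖x‖ ≤ L) :
    ‖x + L • ‖x‖⁻¹ • x‖ = ‖x‖ + L := by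
  have hx' : 0 < ‖x‖ := norm_pos_iff.mpr hx
  have hLx : 0 ≤ L * ‖x‖⁻¹ := mul_nonneg ((norm_nonneg x).trans hxL) (by positivity)
  have hx_eq : x + (L * ‖x‖⁻¹) • x = (1 + L * ‖x‖⁻¹) • x := by rw [add_smul, one_smul]
  rw [smul_smul, hx_eq, norm_smul, Real.norm_eq_abs, abs_of_nonneg (by linarith)]
  field_simp

theorem isChainLink_smul_inv_norm_smul {R d L : ℝ} {x : E} (hx : x ≠ 0) (hRx : 2 * R ≤ ‖x‖)
    (hxL : ‖x‖ ≤ L) (hd : L - ‖x‖ ≤ d) : IsChainLink R d x (L • ‖x‖⁻¹ • x) := by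
  rw [IsChainLink, norm_sub_smul_inv_norm_smul hx hxL, norm_add_smul_inv_norm_smul hx hxL]
  exact ⟨hd, by linarith [norm_nonneg x]⟩

theorem isChainLink_smul {R d L : ℝ} {a b : E} (hL : 0 ≤ L) (hRL : 2 * R ≤ L)
    (hd : L * ‖a - b‖ ≤ d) (hab : ‖a - b‖ + 1 ≤ ‖a + b‖) : IsChainLink R d (L • a) (L • b) := by
  rw [IsChainLink, ← smul_sub, ← smul_add, norm_smul, norm_smul, Real.norm_eq_abs,
    abs_of_nonneg hL]
  exact ⟨hd, by nlinarith⟩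

theorem max_norm_mul_norm_sub_le {x y : E} (hx : x ≠ 0) (hy : y ≠ 0) :
    max ‖x‖ ‖y‖ * ‖‖x‖⁻¹ • x - ‖y‖⁻¹ • y‖ ≤ 2 * ‖x - y‖ := by
  set L := max ‖x‖ ‖y‖
  have hL : 0 ≤ L := (norm_nonneg x).trans (le_max_left _ _)
  calc L * ‖‖x‖⁻¹ • x - ‖y‖⁻¹ • y‖ = ‖L • ‖x‖⁻¹ • x - L • ‖y‖⁻¹ • y‖ := by
        rw [← smul_sub, norm_smul, Real.norm_eq_abs, abs_of_nonneg hL]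
    _ ≤ ‖L • ‖x‖⁻¹ • x - x‖ + ‖x - L • ‖y‖⁻¹ • y‖ := norm_sub_le_norm_sub_add_norm_sub _ _ _
    _ ≤ ‖L • ‖x‖⁻¹ • x - x‖ + (‖x - y‖ + ‖y - L • ‖y‖⁻¹ • y‖) := by
        gcongr; exact norm_sub_le_norm_sub_add_norm_sub _ _ _
    _ = (L - ‖x‖) + (‖x - y‖ + (L - ‖y‖)) := by
        rw [norm_sub_rev, norm_sub_smul_inv_norm_smul hx (le_max_left _ _),
          norm_sub_smul_inv_norm_smul hy (le_max_right _ _)]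
    _ ≤ 2 * ‖x - y‖ := by linarith [max_norm_sub_add_max_norm_sub_le x y]

end Normed

section InnerProduct

variable {E : Type*} [NormedAddCommGroup E] [InnerProductSpace ℝ E]

theorem exists_norm_eq_one_inner_eq_zero (hE : 2 ≤ finrank ℝ E) (u : E) :
    ∃ e : E, ‖e‖ = 1 ∧ ⟪u, e⟫ = 0 := by
  have : FiniteDimensional ℝ E := Module.finite_of_finrank_pos (by omega)
  have hK : (ℝ ∙ u)ᗮ ≠ ⊥ := by
    intro hbot
    have h := (ℝ ∙ u).finrank_add_finrank_orthogonal
    rw [hbot, finrank_bot, add_zero] at h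
    have := finrank_span_le_card (R := ℝ) ({u} : Set E)
    simp only [Set.toFinset_singleton, Finset.card_singleton] at this
    omega
  obtain ⟨v, hv, hv0⟩ := Submodule.exists_mem_ne_zero_of_ne_bot hK
  exact ⟨‖v‖⁻¹ • v, norm_smul_inv_norm hv0, by
    rw [real_inner_smul_right, Submodule.mem_orthogonal_singleton_iff_inner_right.mp hv, mul_zero]⟩

theorem exists_norm_eq_one_inner_eq_zero_and_eq_norm_smul (hE : 2 ≤ finrank ℝ E) {u w : E}
    (huw : ⟪u, w⟫ = 0) : ∃ e : E, ‖e‖ = 1 ∧ ⟪u, e⟫ = 0 ∧ w = ‖w‖ • e := by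
  rcases eq_or_ne w 0 with rfl | hw
  · obtain ⟨e, he, hue⟩ := exists_norm_eq_one_inner_eq_zero hE u
    exact ⟨e, he, hue, by simp⟩
  · refine ⟨‖w‖⁻¹ • w, norm_smul_inv_norm hw, by rw [real_inner_smul_right, huw, mul_zero], ?_⟩
    rw [smul_inv_smul₀ (norm_ne_zero_iff.mpr hw)]

noncomputable def arcPoint (e₁ e₂ : E) (a : ℝ) : E := cos a • e₁ + sin a • e₂

theorem norm_smul_add_smul_sq {e₁ e₂ : E} (he₁ : ‖e₁‖ = 1) (he₂ : ‖e₂‖ = 1) (he : ⟪e₁, e₂⟫ = 0)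
    (a b : ℝ) : ‖a • e₁ + b • e₂‖ ^ 2 = a ^ 2 + b ^ 2 := by
  rw [norm_add_sq_real, real_inner_smul_left, real_inner_smul_right, he, norm_smul, norm_smul,
    he₁, he₂, Real.norm_eq_abs, Real.norm_eq_abs, mul_one, mul_one, sq_abs, sq_abs]
  ring

theorem norm_arcPoint {e₁ e₂ : E} (he₁ : ‖e₁‖ = 1) (he₂ : ‖e₂‖ = 1) (he : ⟪e₁, e₂⟫ = 0)
    (a : ℝ) : ‖arcPoint e₁ e₂ a‖ = 1 := by
  have h := norm_smul_add_smul_sq he₁ he₂ he (cos a) (sin a)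
  rwa [cos_sq_add_sin_sq, pow_eq_one_iff_of_nonneg (norm_nonneg _) two_ne_zero] at h

theorem norm_arcPoint_sub_arcPoint_sq {e₁ e₂ : E} (he₁ : ‖e₁‖ = 1) (he₂ : ‖e₂‖ = 1)
    (he : ⟪e₁, e₂⟫ = 0) (a b : ℝ) :
    ‖arcPoint e₁ e₂ a - arcPoint e₁ e₂ b‖ ^ 2 = 2 * (1 - cos (a - b)) := by
  have h : arcPoint e₁ e₂ a - arcPoint e₁ e₂ b = (cos a - cos b) • e₁ + (sin a - sin b) • e₂ := by
    simp only [arcPoint]; module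
  rw [h, norm_smul_add_smul_sq he₁ he₂ he, cos_sub]
  linear_combination sin_sq_add_cos_sq a + sin_sq_add_cos_sq b

theorem norm_arcPoint_add_arcPoint_sq {e₁ e₂ : E} (he₁ : ‖e₁‖ = 1) (he₂ : ‖e₂‖ = 1)
    (he : ⟪e₁, e₂⟫ = 0) (a b : ℝ) :
    ‖arcPoint e₁ e₂ a + arcPoint e₁ e₂ b‖ ^ 2 = 2 * (1 + cos (a - b)) := by
  have h : arcPoint e₁ e₂ a + arcPoint e₁ e₂ b = (cos a + cos b) • e₁ + (sin a + sin b) • e₂ := by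
    simp only [arcPoint]; module
  rw [h, norm_smul_add_smul_sq he₁ he₂ he, cos_sub]
  linear_combination sin_sq_add_cos_sq a + sin_sq_add_cos_sq b

theorem norm_arcPoint_sub_add_one_le {e₁ e₂ : E} (he₁ : ‖e₁‖ = 1) (he₂ : ‖e₂‖ = 1)
    (he : ⟪e₁, e₂⟫ = 0) {φ : ℝ} (hφ : 0 ≤ cos φ) (h2φ : 0 ≤ cos (2 * φ)) (a : ℝ) :
    ‖arcPoint e₁ e₂ a - arcPoint e₁ e₂ (a + φ)‖ + 1 ≤
      ‖arcPoint e₁ e₂ a + arcPoint e₁ e₂ (a + φ)‖ := by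
  have hD := norm_arcPoint_sub_arcPoint_sq he₁ he₂ he a (a + φ)
  have hS := norm_arcPoint_add_arcPoint_sq he₁ he₂ he a (a + φ)
  rw [sub_add_cancel_left, cos_neg] at hD hS
  rw [cos_two_mul] at h2φ
  set D := ‖arcPoint e₁ e₂ a - arcPoint e₁ e₂ (a + φ)‖
  have hc : 1 / 2 ≤ cos φ := by nlinarith [cos_le_one φ]
  have h2D : 2 * D ≤ 4 * cos φ - 1 := by
    rw [← sq_le_sq₀ (by positivity) (by linarith)]
    nlinarith
  rw [← sq_le_sq₀ (by positivity) (norm_nonneg _)]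
  nlinarith

theorem two_mul_norm_arcPoint_sub_le {e₁ e₂ : E} (he₁ : ‖e₁‖ = 1) (he₂ : ‖e₂‖ = 1)
    (he : ⟪e₁, e₂⟫ = 0) {φ : ℝ} (hφ : 0 ≤ cos φ) (h2φ : 0 ≤ cos (2 * φ)) (a : ℝ) :
    2 * ‖arcPoint e₁ e₂ a - arcPoint e₁ e₂ (a + φ)‖ ≤
      ‖arcPoint e₁ e₂ 0 - arcPoint e₁ e₂ (4 * φ)‖ := by
  have hD := norm_arcPoint_sub_arcPoint_sq he₁ he₂ he a (a + φ)
  have hU := norm_arcPoint_sub_arcPoint_sq he₁ he₂ he 0 (4 * φ)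
  rw [sub_add_cancel_left, cos_neg] at hD
  have h4φ : cos (4 * φ) = 2 * (2 * cos φ ^ 2 - 1) ^ 2 - 1 := by
    rw [show 4 * φ = 2 * (2 * φ) by ring, cos_two_mul, cos_two_mul]
  rw [zero_sub, cos_neg, h4φ] at hU
  rw [cos_two_mul] at h2φ
  have hc : cos φ ≤ 1 := cos_le_one φ
  rw [← sq_le_sq₀ (by positivity) (norm_nonneg _), mul_pow, hD, hU]
  nlinarith [mul_nonneg (sub_nonneg.mpr hc) (by nlinarith : 0 ≤ 2 * cos φ ^ 2 * (1 + cos φ) - 1)]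

theorem exists_eq_arcPoint_angle (hE : 2 ≤ finrank ℝ E) {u v : E} (hu : ‖u‖ = 1)
    (hv : ‖v‖ = 1) : ∃ e : E, ‖e‖ = 1 ∧ ⟪u, e⟫ = 0 ∧ v = arcPoint u e (angle u v) := by
  have hcos : cos (angle u v) = ⟪u, v⟫ := by
    simpa [hu, hv] using cos_angle_mul_norm_mul_norm u v
  set w := v - ⟪u, v⟫ • u
  have huw : ⟪u, w⟫ = 0 := by
    simp only [w, inner_sub_right, real_inner_smul_right, real_inner_self_eq_norm_sq, hu]
    ring
  have hw : ‖w‖ = sin (angle u v) := by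
    have hw2 : ‖w‖ ^ 2 = sin (angle u v) ^ 2 := by
      rw [sin_sq, hcos, norm_sub_sq_real, real_inner_smul_right, norm_smul, hu, hv,
        real_inner_comm, Real.norm_eq_abs]
      ring_nf; rw [sq_abs]; ring
    exact (pow_left_inj₀ (norm_nonneg w) (sin_angle_nonneg u v) two_ne_zero).mp hw2
  obtain ⟨e, he, hue, hwe⟩ := exists_norm_eq_one_inner_eq_zero_and_eq_norm_smul hE huw
  refine ⟨e, he, hue, ?_⟩
  rw [arcPoint, hcos, ← hw, ← hwe, add_sub_cancel]

end InnerProduct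

theorem exists_sphere_chain {E : Type*} [NormedAddCommGroup E] [InnerProductSpace ℝ E]
    (hE : 2 ≤ finrank ℝ E) {R : ℝ} (hR : 0 < R) {x y : E} (hx : 2 * R ≤ ‖x‖)
    (hy : 2 * R ≤ ‖y‖) :
    ∃ q : ℕ → E, (∀ j, ‖q j‖ = max ‖x‖ ‖y‖) ∧ IsChainLink R ‖x - y‖ x (q 0) ∧
      (∀ j, IsChainLink R ‖x - y‖ (q j) (q (j + 1))) ∧ IsChainLink R ‖x - y‖ (q 4) y := by
  have hx₀ : x ≠ 0 := norm_pos_iff.mp (by linarith)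
  have hy₀ : y ≠ 0 := norm_pos_iff.mp (by linarith)
  set u := ‖x‖⁻¹ • x
  set v := ‖y‖⁻¹ • y
  have hu : ‖u‖ = 1 := norm_smul_inv_norm (𝕜 := ℝ) hx₀
  obtain ⟨e, he, hue, hv⟩ := exists_eq_arcPoint_angle (v := v) hE hu (norm_smul_inv_norm hy₀)
  set θ := angle u v
  set L := max ‖x‖ ‖y‖
  have hL : 2 * R ≤ L := hx.trans (le_max_left _ _)
  have hxy := max_norm_sub_add_max_norm_sub_le x y
  have hθ₀ := angle_nonneg u v
  have hθπ := angle_le_pi u v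
  have hφ : 0 ≤ cos (θ / 4) := cos_nonneg_of_mem_Icc ⟨by linarith [pi_pos], by linarith⟩
  have h2φ : 0 ≤ cos (2 * (θ / 4)) := cos_nonneg_of_mem_Icc ⟨by linarith [pi_pos], by linarith⟩
  have hq_succ (j : ℕ) : ((j + 1 : ℕ) : ℝ) * (θ / 4) = j * (θ / 4) + θ / 4 := by push_cast; ring
  refine ⟨fun j => L • arcPoint u e (j * (θ / 4)), fun j => ?_, ?_, fun j => ?_, ?_⟩
  · rw [norm_smul, norm_arcPoint hu he hue, Real.norm_eq_abs, abs_of_nonneg (by linarith),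
      mul_one]
  · simpa [arcPoint] using isChainLink_smul_inv_norm_smul hx₀ hx (le_max_left _ _)
      (by linarith [le_max_right ‖x‖ ‖y‖])
  · refine isChainLink_smul (by linarith) hL ?_ ?_
    · calc L * ‖arcPoint u e (j * (θ / 4)) - arcPoint u e ((j + 1 : ℕ) * (θ / 4))‖
          ≤ L * (‖u - v‖ / 2) := by
            gcongr
            rw [hq_succ, hv, le_div_iff₀ two_pos, mul_comm, show θ = 4 * (θ / 4) by ring]
            simpa [arcPoint] using two_mul_norm_arcPoint_sub_le hu he hue hφ h2φ (j * (θ / 4))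
        _ ≤ ‖x - y‖ := by linarith [max_norm_mul_norm_sub_le hx₀ hy₀]
    · rw [hq_succ]
      exact norm_arcPoint_sub_add_one_le hu he hue hφ h2φ _
  · have hq₄ : arcPoint u e (((4 : ℕ) : ℝ) * (θ / 4)) = v := by rw [hv]; congr 1; push_cast; ring
    simp only [hq₄]
    exact (isChainLink_smul_inv_norm_smul hy₀ hy (le_max_right _ _)
      (by linarith [le_max_left ‖x‖ ‖y‖])).symm

/-- Finite Chain Lemma: any two points of norm at least `2R` in `ℝⁿ` (`n ≥ 2`) can be
joined by a chain of at most `8` intermediate points of norm at least `2R`, with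
consecutive gaps at most `‖x - y‖`, such that each ball with a consecutive pair as an
antipodal diameter pair avoids `B_R(0)`. -/
theorem finite_chain_lemma (n : ℕ) (hn : 2 ≤ n) (R : ℝ) (hR : 0 < R)
    (x y : EuclideanSpace ℝ (Fin n)) (hx : 2 * R ≤ ‖x‖) (hy : 2 * R ≤ ‖y‖) :
    ∃ (m : ℕ) (w : ℕ → EuclideanSpace ℝ (Fin n)),
      1 ≤ m ∧ m ≤ 8 ∧
      w 0 = x ∧ w (m + 1) = y ∧
      (∀ i, 1 ≤ i → i ≤ m → 2 * R ≤ ‖w i‖) ∧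
      (∀ i ≤ m, ‖w i - w (i + 1)‖ ≤ ‖x - y‖) ∧
      (∀ i ≤ m,
        Metric.ball (((1 : ℝ) / 2) • (w i + w (i + 1))) (‖w i - w (i + 1)‖ / 2) ⊆
          (Metric.ball (0 : EuclideanSpace ℝ (Fin n)) R)ᶜ) := by
  have hE : 2 ≤ finrank ℝ (EuclideanSpace ℝ (Fin n)) := by rwa [finrank_euclideanSpace_fin]
  obtain ⟨q, hq, hx_link, hq_link, hy_link⟩ := exists_sphere_chain hE hR hx hy
  let w : ℕ → EuclideanSpace ℝ (Fin n) := fun i =>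
    if i = 0 then x else if i ≤ 5 then q (i - 1) else y
  have hlink (i : ℕ) (hi : i ≤ 5) : IsChainLink R ‖x - y‖ (w i) (w (i + 1)) := by
    interval_cases i
    exacts [hx_link, hq_link 0, hq_link 1, hq_link 2, hq_link 3, hy_link]
  refine ⟨5, w, by norm_num, by norm_num, rfl, rfl, fun i hi₁ hi₅ => ?_,
    fun i hi => (hlink i hi).1, fun i hi => ball_midpoint_subset_compl_ball (hlink i hi).2⟩
  simp only [w, if_neg (by omega : i ≠ 0), if_pos hi₅, hq]
  exact hx.trans (le_max_left _ _)
end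

section
/- Let a ≥ 1 and let x, y ∈ ℝ² with ‖x‖ = ‖y‖ = 1 + a. If ‖y − x‖ > a, then there exist m ∈ {1, …, 7} and points z_1, …, z_m ∈ ℝ² such that ‖z_1‖ = ⋯ = ‖z_m‖ = 1 + a, ‖x − z_1‖ = ‖z_1 − z_2‖ = ⋯ = ‖z_{m−1} − z_m‖ = a, and ‖y − z_m‖ ≤ a. -/
/-!
Identify the plane with `ℂ`. On the circle of radius `1 + a` a chord of length `a` subtends
the angle `θ = 2 arcsin (a / (2 (1 + a)))`, and `a ≥ 1` gives `θ > π / 7`. Rotating `x` by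
`±θ` again and again, towards `y`, the angle to `y` (at most `π`) drops below `θ` after at
most `7` steps, and then the chord to `y` is at most `a`.
-/

open Real

namespace Real

lemma abs_sin_half_le_sin_half {w θ : ℝ} (hw : |w| ≤ θ) (hθ : θ ≤ π) :
    |sin (w / 2)| ≤ sin (θ / 2) := by
  have hw2 : |w / 2| ≤ π := by rw [abs_div, abs_two]; linarith [pi_pos]
  rw [abs_sin_eq_sin_abs_of_abs_le_pi hw2, abs_div, abs_two]
  exact sin_le_sin_of_le_of_le_pi_div_two (by linarith [abs_nonneg w, pi_pos]) (by linarith)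
    (by linarith)

lemma abs_sin_half_eq_sin_half {w θ : ℝ} (hw : |w| = θ) (hθ : θ ≤ π) :
    |sin (w / 2)| = sin (θ / 2) := by
  have hw2 : |w / 2| ≤ π := by rw [abs_div, abs_two]; linarith [pi_pos]
  rw [abs_sin_eq_sin_abs_of_abs_le_pi hw2, abs_div, abs_two, hw]

lemma pi_div_seven_lt_two_mul_arcsin {c : ℝ} (hc : 1 / 4 ≤ c) : π / 7 < 2 * arcsin c := by
  have hsin : sin (π / 14) < 1 / 4 := by
    linarith [sin_le (by positivity : 0 ≤ π / 14), pi_lt_d2]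
  have h : π / 14 < arcsin (1 / 4) :=
    (lt_arcsin_iff_sin_lt ⟨by linarith [pi_pos], by linarith [pi_pos]⟩
      ⟨by norm_num, by norm_num⟩).2 hsin
  linarith [arcsin_le_arcsin hc]

end Real

/-- Walking from `0` in steps `t = ±θ` of the sign of `φ`, step number `⌊|φ| / θ⌋₊ + 1` is the
first one to get past `φ`, hence it ends within `θ` of `φ`. -/
lemma exists_abs_eq_abs_sub_floor_add_one_mul_le (φ : ℝ) {θ : ℝ} (hθ : 0 < θ) :
    ∃ t : ℝ, |t| = θ ∧ |φ - (⌊|φ| / θ⌋₊ + 1) * t| ≤ θ := by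
  set n := ⌊|φ| / θ⌋₊
  have hn_le : n * θ ≤ |φ| := (le_div_iff₀ hθ).1 (Nat.floor_le (by positivity))
  have hn_lt : |φ| < (n + 1) * θ := (div_lt_iff₀ hθ).1 (Nat.lt_floor_add_one _)
  rcases le_total 0 φ with hφ | hφ
  · rw [abs_of_nonneg hφ] at hn_le hn_lt
    exact ⟨θ, abs_of_pos hθ, abs_le.2 ⟨by linarith, by linarith⟩⟩
  · rw [abs_of_nonpos hφ] at hn_le hn_lt
    exact ⟨-θ, by rw [abs_neg, abs_of_pos hθ], abs_le.2 ⟨by linarith, by linarith⟩⟩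

namespace Complex

lemma norm_mul_exp_sub_mul_exp (c : ℂ) (u v : ℝ) :
    ‖c * exp (I * u) - c * exp (I * v)‖ = 2 * ‖c‖ * |Real.sin ((u - v) / 2)| := by
  have h : c * exp (I * u) - c * exp (I * v) = c * exp (I * v) * (exp (I * ↑(u - v)) - 1) := by
    rw [mul_assoc, mul_sub, ← exp_add]
    push_cast
    ring_nf
  rw [h, norm_mul, norm_mul, norm_exp_I_mul_ofReal, norm_exp_I_mul_ofReal_sub_one, norm_mul,
    Real.norm_eq_abs, Real.norm_eq_abs, abs_two]
  ring

lemma eq_mul_exp_I_mul_arg_div {X Y : ℂ} (h : ‖X‖ = ‖Y‖) : Y = X * exp (I * arg (Y / X)) := by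
  rcases eq_or_ne X 0 with rfl | hX
  · simpa using h.symm
  have hYX : ‖Y / X‖ = 1 := by rw [norm_div, h, div_self (h ▸ norm_ne_zero_iff.2 hX)]
  have := norm_mul_exp_arg_mul_I (Y / X)
  rw [hYX, ofReal_one, one_mul, mul_comm _ I] at this
  rw [this, mul_div_cancel₀ _ hX]

theorem exists_chain_on_circle (X Y : ℂ) (hXY : ‖X‖ = ‖Y‖) {θ : ℝ} (hθ₀ : 0 < θ) (hθπ : θ ≤ π) :
    ∃ z : ℕ → ℂ, (∀ i, ‖z i‖ = ‖X‖) ∧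
      ‖X - z 1‖ = 2 * ‖X‖ * Real.sin (θ / 2) ∧
      (∀ i, ‖z i - z (i + 1)‖ = 2 * ‖X‖ * Real.sin (θ / 2)) ∧
      ‖Y - z (⌊|arg (Y / X)| / θ⌋₊ + 1)‖ ≤ 2 * ‖X‖ * Real.sin (θ / 2) := by
  obtain ⟨t, ht, hlast⟩ := exists_abs_eq_abs_sub_floor_add_one_mul_le (arg (Y / X)) hθ₀
  refine ⟨fun i ↦ X * exp (I * (i * t : ℝ)), fun i ↦ ?_, ?_, fun i ↦ ?_, ?_⟩
  · rw [norm_mul, norm_exp_I_mul_ofReal, mul_one]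
  · have h := norm_mul_exp_sub_mul_exp X 0 ((1 : ℕ) * t)
    rw [ofReal_zero, mul_zero, exp_zero, mul_one] at h
    rw [h, Real.abs_sin_half_eq_sin_half (by rw [Nat.cast_one, one_mul, zero_sub, abs_neg, ht]) hθπ]
  · rw [norm_mul_exp_sub_mul_exp,
      Real.abs_sin_half_eq_sin_half (by push_cast; rw [← ht, ← abs_neg]; ring_nf) hθπ]
  · nth_rw 1 [eq_mul_exp_I_mul_arg_div hXY]
    rw [norm_mul_exp_sub_mul_exp]
    gcongr
    exact Real.abs_sin_half_le_sin_half (by push_cast; exact hlast) hθπ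

end Complex

theorem circle_chain_lemma_general (a : ℝ) (ha : 1 ≤ a)
    (x y : EuclideanSpace ℝ (Fin 2))
    (hx : ‖x‖ = 1 + a) (hy : ‖y‖ = 1 + a) :
    ∃ (m : ℕ) (z : ℕ → EuclideanSpace ℝ (Fin 2)),
      1 ≤ m ∧ m ≤ 7 ∧
      (∀ i, 1 ≤ i → i ≤ m → ‖z i‖ = 1 + a) ∧
      ‖x - z 1‖ = a ∧
      (∀ i, 1 ≤ i → i < m → ‖z i - z (i + 1)‖ = a) ∧
      ‖y - z m‖ ≤ a := by
  let f : ℂ ≃ₗᵢ[ℝ] EuclideanSpace ℝ (Fin 2) := Complex.orthonormalBasisOneI.repr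
  obtain ⟨X, rfl⟩ := f.surjective x
  obtain ⟨Y, rfl⟩ := f.surjective y
  rw [f.norm_map] at hx hy
  set c := a / (2 * (1 + a))
  have hc : 1 / 4 ≤ c := by rw [le_div_iff₀ (by positivity)]; linarith
  have hc1 : c ≤ 1 := by rw [div_le_iff₀ (by positivity)]; linarith
  set θ := 2 * arcsin c
  have hθπ : θ ≤ π := by linarith [arcsin_le_pi_div_two c]
  have hθ₀ : 0 < θ := by linarith [pi_div_seven_lt_two_mul_arcsin hc, pi_pos]
  have hchord : 2 * ‖X‖ * sin (θ / 2) = a := by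
    rw [mul_div_cancel_left₀ _ two_ne_zero, sin_arcsin (by linarith) hc1, hx]
    exact mul_div_cancel₀ a (by positivity)
  obtain ⟨z, hz, hfirst, hstep, hlast⟩ :=
    Complex.exists_chain_on_circle X Y (hx.trans hy.symm) hθ₀ hθπ
  have hsteps : ⌊|Complex.arg (Y / X)| / θ⌋₊ < 7 := by
    rw [Nat.floor_lt (by positivity), div_lt_iff₀ hθ₀]
    linarith [Complex.abs_arg_le_pi (Y / X), pi_div_seven_lt_two_mul_arcsin hc]
  refine ⟨_, f ∘ z, le_add_self, hsteps, fun i _ _ ↦ ?_, ?_, fun i _ _ ↦ ?_, ?_⟩ <;>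
    simp only [Function.comp_apply, ← map_sub, f.norm_map]
  · rw [hz, hx]
  · rw [hfirst, hchord]
  · rw [hstep, hchord]
  · rw [← hchord]; exact hlast

/-- Chain lemma on the circle of radius `1 + a` (`a ≥ 1`) in `ℝ²`: if `x, y` lie on this
circle with `‖y - x‖ > a`, there is a chain of at most `7` points on the circle starting
at distance `a` from `x`, with consecutive distances `a`, ending within distance `a`
of `y`. -/
theorem circle_chain_lemma (a : ℝ) (ha : 1 ≤ a)
    (x y : EuclideanSpace ℝ (Fin 2))
    (hx : ‖x‖ = 1 + a) (hy : ‖y‖ = 1 + a) (hxy : a < ‖y - x‖) :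
    ∃ (m : ℕ) (z : ℕ → EuclideanSpace ℝ (Fin 2)),
      1 ≤ m ∧ m ≤ 7 ∧
      (∀ i, 1 ≤ i → i ≤ m → ‖z i‖ = 1 + a) ∧
      ‖x - z 1‖ = a ∧
      (∀ i, 1 ≤ i → i < m → ‖z i - z (i + 1)‖ = a) ∧
      ‖y - z m‖ ≤ a :=
  circle_chain_lemma_general a ha x y hx hy
end

section
/- Let s ≥ t > 0 and let x, y ∈ ℝ² with ‖y‖ ≥ ‖x‖ = t + s, and suppose ‖(‖x‖/‖y‖)·y − x‖ > s. Then there exist m ∈ {1, …, 8} and points z_1, …, z_m ∈ ℝ² such that: (i) ‖z_1‖ = ⋯ = ‖z_m‖ = t + s and, writing w_0 = x, w_i = z_i for 1 ≤ i ≤ m, w_{m+1} = y, one has ‖w_i − w_{i+1}‖ ≤ ‖y − x‖ for every 0 ≤ i ≤ m; and (ii) for every 0 ≤ i ≤ m, the open ball of radius ‖w_i − w_{i+1}‖/2 centered at (w_i + w_{i+1})/2 is contained in ℝ² \ B_t(0), where B_t(0) is the open ball of radius t centered at the origin. -/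
/-!
Let `p = (‖x‖ / ‖y‖) • y` be the radial projection of `y` onto the circle of radius `R = t + s`;
it is no farther from `x` than `y` is, so `s < ‖p - x‖ ≤ ‖y - x‖`. Rotating `x` to `p` in seven
equal steps gives points of norm `R` whose chords have length at most `R π / 7 ≤ 2 s π / 7 < s`,
and the chain ends with the radial step from `p` to `y`, of length `‖y‖ - R ≤ ‖y - x‖`.
A ball with diameter `[u, v]` misses `B_t(0)` as soon as `2 t + ‖u - v‖ ≤ ‖u + v‖`: for a chord
of length at most `s` between points of norm `t + s` this follows from the parallelogram law,
and for the radial step it holds because both endpoints have norm at least `t`.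
-/

open Metric Complex Real

section NormedSpace

variable {E : Type*} [SeminormedAddCommGroup E] [NormedSpace ℝ E]

theorem ball_midpoint_subset_compl_ball_zero {u v : E} {t : ℝ}
    (h : 2 * t + ‖u - v‖ ≤ ‖u + v‖) :
    ball (((1 : ℝ) / 2) • (u + v)) (‖u - v‖ / 2) ⊆ (ball (0 : E) t)ᶜ := by
  rw [Set.subset_compl_iff_disjoint_right]
  apply ball_disjoint_ball
  rw [dist_zero_right, norm_smul, Real.norm_of_nonneg (by norm_num)]
  linarith

theorem SameRay.ball_midpoint_subset_compl_ball_zero {u v : E} {t : ℝ} (huv : SameRay ℝ u v)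
    (hu : t ≤ ‖u‖) (hv : t ≤ ‖v‖) :
    ball (((1 : ℝ) / 2) • (u + v)) (‖u - v‖ / 2) ⊆ (ball (0 : E) t)ᶜ :=
  _root_.ball_midpoint_subset_compl_ball_zero <| by
    rw [huv.norm_add, huv.norm_sub]
    cases abs_cases (‖u‖ - ‖v‖) <;> linarith

end NormedSpace

section InnerProductSpace

variable {F : Type*} [NormedAddCommGroup F] [InnerProductSpace ℝ F]

theorem ball_midpoint_subset_compl_ball_zero_of_norm_eq {u v : F} {s t : ℝ} (ht : 0 ≤ t)
    (hu : ‖u‖ = t + s) (hv : ‖v‖ = t + s) (huv : ‖u - v‖ ≤ s) :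
    ball (((1 : ℝ) / 2) • (u + v)) (‖u - v‖ / 2) ⊆ (ball (0 : F) t)ᶜ :=
  ball_midpoint_subset_compl_ball_zero <| by
    have hpar := parallelogram_law_with_norm ℝ u v
    rw [← pow_le_pow_iff_left₀ (by positivity) (norm_nonneg _) two_ne_zero]
    nlinarith [norm_nonneg (u - v)]

theorem norm_div_norm_smul_sub_le {x y : F} (h : ‖x‖ ≤ ‖y‖) :
    ‖(‖x‖ / ‖y‖) • y - x‖ ≤ ‖y - x‖ := by
  rcases eq_or_ne y 0 with rfl | hy
  · simp
  have hy : 0 < ‖y‖ := norm_pos_iff.mpr hy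
  rw [← pow_le_pow_iff_left₀ (norm_nonneg _) (norm_nonneg _) two_ne_zero, norm_sub_sq_real,
    norm_sub_sq_real, real_inner_smul_left, norm_smul, Real.norm_of_nonneg (by positivity),
    div_mul_cancel₀ _ hy.ne']
  have hinner := real_inner_le_norm y x
  rw [← sub_nonneg]
  have hdiff : ‖y‖ ^ 2 - 2 * inner ℝ y x + ‖x‖ ^ 2
        - (‖x‖ ^ 2 - 2 * (‖x‖ / ‖y‖ * inner ℝ y x) + ‖x‖ ^ 2)
      = (‖y‖ - ‖x‖) * (‖y‖ ^ 2 + ‖x‖ * ‖y‖ - 2 * inner ℝ y x) / ‖y‖ := by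
    field_simp; ring
  rw [hdiff]
  apply div_nonneg _ hy.le
  exact mul_nonneg (by linarith) (by nlinarith)

end InnerProductSpace

theorem Complex.mul_exp_arg_div_mul_I {x p : ℂ} (h : ‖p‖ = ‖x‖) :
    x * exp (I * arg (p / x)) = p := by
  rcases eq_or_ne x 0 with rfl | hx
  · simp_all
  have h1 : ‖p / x‖ = 1 := by rw [norm_div, h, div_self (norm_ne_zero_iff.mpr hx)]
  have := norm_mul_exp_arg_mul_I (p / x)
  rw [h1, ofReal_one, one_mul, mul_comm] at this
  rw [this, mul_div_cancel₀ _ hx]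

theorem Complex.exists_chain_on_circle_s12 {x p : ℂ} (h : ‖p‖ = ‖x‖) {n : ℕ} (hn : n ≠ 0) :
    ∃ w : ℕ → ℂ, w 0 = x ∧ w n = p ∧ (∀ i, ‖w i‖ = ‖x‖) ∧
      ∀ i, ‖w i - w (i + 1)‖ ≤ ‖x‖ * π / n := by
  set θ := arg (p / x)
  refine ⟨fun i => x * exp (I * (θ * i / n : ℝ)), by simp, ?_, fun i => ?_, fun i => ?_⟩
  · beta_reduce
    rw [mul_div_cancel_right₀ _ (Nat.cast_ne_zero.mpr hn), mul_exp_arg_div_mul_I h]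
  · rw [norm_mul, norm_exp_I_mul_ofReal, mul_one]
  · have hstep : x * exp (I * (θ * i / n : ℝ)) - x * exp (I * (θ * (i + 1 : ℕ) / n : ℝ))
        = -(x * exp (I * (θ * i / n : ℝ))) * (exp (I * (θ / n : ℝ)) - 1) := by
      have hexp : exp (I * (θ * (i + 1 : ℕ) / n : ℝ))
          = exp (I * (θ * i / n : ℝ)) * exp (I * (θ / n : ℝ)) := by
        rw [← exp_add]; push_cast; ring_nf
      rw [hexp]; ring
    rw [hstep, norm_mul, norm_neg, norm_mul, norm_exp_I_mul_ofReal, mul_one, mul_div_assoc]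
    refine mul_le_mul_of_nonneg_left (Real.norm_exp_I_mul_ofReal_sub_one_le.trans ?_)
      (norm_nonneg _)
    rw [Real.norm_eq_abs, abs_div, Nat.abs_cast]
    exact div_le_div_of_nonneg_right (abs_arg_le_pi _) (Nat.cast_nonneg _)

theorem exists_chain_on_sphere_of_finrank_eq_two {F : Type*} [NormedAddCommGroup F]
    [InnerProductSpace ℝ F] (hF : Module.finrank ℝ F = 2) {x p : F} (h : ‖p‖ = ‖x‖) {n : ℕ}
    (hn : n ≠ 0) :
    ∃ w : ℕ → F, w 0 = x ∧ w n = p ∧ (∀ i, ‖w i‖ = ‖x‖) ∧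
      ∀ i, ‖w i - w (i + 1)‖ ≤ ‖x‖ * π / n := by
  have : FiniteDimensional ℝ F := Module.finite_of_finrank_eq_succ hF
  let e : ℂ ≃ₗᵢ[ℝ] F := isometryOfOrthonormal ((stdOrthonormalBasis ℝ F).reindex (finCongr hF))
  obtain ⟨w, hw0, hwn, hnorm, hgap⟩ :=
    Complex.exists_chain_on_circle_s12 (x := e.symm x) (p := e.symm p) (by simpa using h) hn
  refine ⟨e ∘ w, by simp [hw0], by simp [hwn], fun i => by simpa using hnorm i, fun i => ?_⟩
  simpa [← map_sub] using hgap i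

/-- Chain corollary in `ℝ²`: for `s ≥ t > 0` and `‖y‖ ≥ ‖x‖ = t + s`, if the radial
projection of `y` to the circle of radius `‖x‖` is at distance more than `s` from `x`,
then `x` and `y` are joined by a chain of at most `8` points of norm `t + s`, with
consecutive gaps at most `‖y - x‖`, whose diameter balls avoid `B_t(0)`. -/
theorem chain_corollary_dim2 (s t : ℝ) (hts : t ≤ s) (ht : 0 < t)
    (x y : EuclideanSpace ℝ (Fin 2))
    (hx : ‖x‖ = t + s) (hxy : ‖x‖ ≤ ‖y‖)
    (hproj : s < ‖(‖x‖ / ‖y‖) • y - x‖) :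
    ∃ (m : ℕ) (w : ℕ → EuclideanSpace ℝ (Fin 2)),
      1 ≤ m ∧ m ≤ 8 ∧
      w 0 = x ∧ w (m + 1) = y ∧
      (∀ i, 1 ≤ i → i ≤ m → ‖w i‖ = t + s) ∧
      (∀ i ≤ m, ‖w i - w (i + 1)‖ ≤ ‖y - x‖) ∧
      (∀ i ≤ m,
        Metric.ball (((1 : ℝ) / 2) • (w i + w (i + 1))) (‖w i - w (i + 1)‖ / 2) ⊆
          (Metric.ball (0 : EuclideanSpace ℝ (Fin 2)) t)ᶜ) := by
  have hy : 0 < ‖y‖ := by linarith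
  set p := (‖x‖ / ‖y‖) • y
  have hp : ‖p‖ = ‖x‖ := by
    rw [norm_smul, Real.norm_of_nonneg (by positivity), div_mul_cancel₀ _ hy.ne']
  have hpy : SameRay ℝ p y := SameRay.sameRay_nonneg_smul_left y (by positivity)
  have hs : s < ‖y - x‖ := hproj.trans_le (norm_div_norm_smul_sub_le hxy)
  obtain ⟨w, hw0, hw7, hwx, hgap⟩ :=
    exists_chain_on_sphere_of_finrank_eq_two finrank_euclideanSpace_fin hp (n := 7) (by norm_num)
  -- `π < 3.5` and `t ≤ s` make the seven arcs of angle at most `π / 7` shorter than `s`.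
  have hgap_s : ∀ i, ‖w i - w (i + 1)‖ ≤ s := fun i =>
    (hgap i).trans (by rw [hx]; nlinarith [pi_lt_d2])
  have hlast : ‖p - y‖ = ‖y‖ - ‖x‖ := by
    rw [hpy.norm_sub, hp, abs_of_nonpos (by linarith), neg_sub]
  refine ⟨7, fun i => if i ≤ 7 then w i else y, by norm_num, by norm_num, by simp [hw0], by simp,
    fun i _ hi => by simp [hi, hwx, hx], fun i hi => ?_, fun i hi => ?_⟩
  · rcases hi.lt_or_eq with hi | rfl
    · simp only [hi.le, Nat.succ_le_of_lt hi, if_true]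
      linarith [hgap_s i]
    · simp only [le_refl, if_true, hw7, show ¬7 + 1 ≤ 7 by norm_num, if_false, hlast]
      exact norm_sub_norm_le y x
  · rcases hi.lt_or_eq with hi | rfl
    · simp only [hi.le, Nat.succ_le_of_lt hi, if_true]
      exact ball_midpoint_subset_compl_ball_zero_of_norm_eq ht.le (by rw [hwx, hx])
        (by rw [hwx, hx]) (hgap_s i)
    · simp only [le_refl, if_true, hw7, show ¬7 + 1 ≤ 7 by norm_num, if_false]
      exact hpy.ball_midpoint_subset_compl_ball_zero (by linarith) (by linarith)
end

section
/- Let n ≥ 2, n < p < ∞, C > 0, and let u : ℝⁿ → ℝ be a nonconstant differentiable function with x ↦ ‖∇u(x)‖^p Lebesgue integrable, satisfying the localized Morrey estimate: for all x, y ∈ ℝⁿ, |u(x) − u(y)| ≤ C ‖x − y‖^{1−n/p} (∫_{B_{‖x−y‖/2}((x+y)/2)} ‖∇u(z)‖^p dz)^{1/p}. Then the (1−n/p)-Hölder ratio of u attains its supremum: there exist x0, y0 ∈ ℝⁿ with x0 ≠ y0 such that for all x ≠ y, |u(x) − u(y)|/‖x − y‖^{1−n/p} ≤ |u(x0) − u(y0)|/‖x0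 − y0‖^{1−n/p}. -/
/-!
Fix `(a, b)` with `u a ≠ u b`. Outside a compact set of pairs the ratio is at most half its value
at `(a, b)`, so its maximum over that compact set is global. Close pairs have diametral balls of
small measure, so absolute continuity of the integral makes the ratio small. Pairs whose diametral
ball avoids a large ball `closedBall 0 ρ` see only the small tail energy. A far-apart pair whose
ball meets `closedBall 0 ρ` is handled by retracting both points radially onto `closedBall 0 ρ`:
the ball of each radial segment avoids `closedBall 0 ρ`, and the jump between the retracted
points is bounded by the global Hölder bound at the fixed scale `2 ρ`, negligible against
`‖x - y‖ ^ α`.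
-/

open MeasureTheory Filter Topology Metric

section HolderRatio

variable {X : Type*} [NormedAddCommGroup X]

noncomputable def holderRatio (u : X → ℝ) (α : ℝ) (x y : X) : ℝ := |u x - u y| / ‖x - y‖ ^ α

lemma continuous_of_abs_sub_le_mul_rpow {u : X → ℝ} {M α : ℝ} (hα : 0 < α)
    (h : ∀ a b : X, |u a - u b| ≤ M * ‖a - b‖ ^ α) : Continuous u := by
  refine continuous_iff_continuousAt.2 fun x => ?_
  have hc : Continuous fun y : X => M * ‖y - x‖ ^ α :=
    ((continuous_id.sub continuous_const).norm.rpow_const fun _ => Or.inr hα.le).const_mul M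
  have hlim : Tendsto (fun y => M * ‖y - x‖ ^ α) (𝓝 x) (𝓝 0) := by
    simpa [Real.zero_rpow hα.ne'] using hc.tendsto x
  rw [ContinuousAt, tendsto_iff_norm_sub_tendsto_zero]
  exact squeeze_zero (fun _ => norm_nonneg _) (fun y => h y x) hlim

lemma isCompact_setOf_le_norm_sub_le_and_norm_le [ProperSpace X] (r R : ℝ) :
    IsCompact {z : X × X | r ≤ ‖z.1 - z.2‖ ∧ ‖z.1 - z.2‖ ≤ R ∧ ‖z.1‖ ≤ R} := by
  have hd : Continuous fun z : X × X => ‖z.1 - z.2‖ := (continuous_fst.sub continuous_snd).norm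
  refine (isCompact_closedBall (0 : X × X) (2 * R)).of_isClosed_subset
    ((isClosed_le continuous_const hd).inter ((isClosed_le hd continuous_const).inter
      (isClosed_le continuous_fst.norm continuous_const))) fun z hz => ?_
  have := norm_le_norm_add_norm_sub z.1 z.2
  rw [mem_closedBall_zero_iff, Prod.norm_def]
  exact max_le (by linarith [hz.2.2, norm_nonneg z.1]) (by linarith [hz.2.1, hz.2.2])

theorem exists_ne_forall_holderRatio_le [ProperSpace X] {u : X → ℝ} {α : ℝ}
    (hu : Continuous u) (hα : 0 < α) (hnc : ∃ a b, u a ≠ u b)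
    (hdecay : ∀ β > 0, ∃ r > 0, ∃ R, ∀ x y : X, (‖x - y‖ ≤ r ∨ R ≤ ‖x - y‖ ∨ R ≤ ‖x‖) →
      |u x - u y| ≤ β * ‖x - y‖ ^ α) :
    ∃ x₀ y₀ : X, x₀ ≠ y₀ ∧ ∀ x y, holderRatio u α x y ≤ holderRatio u α x₀ y₀ := by
  obtain ⟨a, b, hab⟩ := hnc
  set θ := holderRatio u α a b
  have hθ : 0 < θ := div_pos (abs_pos.2 (sub_ne_zero.2 hab))
    (Real.rpow_pos_of_pos (norm_pos_iff.2 (sub_ne_zero.2 (ne_of_apply_ne u hab))) _)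
  obtain ⟨r, hr, R, hdec⟩ := hdecay (θ / 2) (half_pos hθ)
  set K : Set (X × X) := {z | r ≤ ‖z.1 - z.2‖ ∧ ‖z.1 - z.2‖ ≤ R ∧ ‖z.1‖ ≤ R}
  have hout : ∀ z ∉ K, holderRatio u α z.1 z.2 ≤ θ / 2 := by
    intro z hz
    refine div_le_of_le_mul₀ (by positivity) (by positivity) (hdec _ _ ?_)
    simp only [K, Set.mem_ofPred_eq, not_and_or, not_le] at hz
    rcases hz with h | h | h
    exacts [Or.inl h.le, Or.inr (Or.inl h.le), Or.inr (Or.inr h.le)]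
  have hd : Continuous fun z : X × X => ‖z.1 - z.2‖ := (continuous_fst.sub continuous_snd).norm
  have hcont : ContinuousOn (fun z : X × X => holderRatio u α z.1 z.2) K :=
    ((hu.comp continuous_fst).sub (hu.comp continuous_snd)).abs.continuousOn.div
      (hd.rpow_const fun _ => Or.inr hα.le).continuousOn
      fun z hz => (Real.rpow_pos_of_pos (hr.trans_le hz.1) _).ne'
  have habK : (a, b) ∈ K := by
    by_contra h
    linarith [hout _ h]
  obtain ⟨z, hzK, hzmax⟩ :=
    (isCompact_setOf_le_norm_sub_le_and_norm_le r R).exists_isMaxOn ⟨_, habK⟩ hcont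
  have hθz : θ ≤ holderRatio u α z.1 z.2 := hzmax habK
  refine ⟨z.1, z.2, fun h => ?_, fun x y => ?_⟩
  · have := hzK.1
    rw [h, sub_self, norm_zero] at this
    linarith
  · by_cases hxy : (x, y) ∈ K
    · exact hzmax hxy
    · linarith [hout _ hxy]

end HolderRatio

variable {E : Type*} [NormedAddCommGroup E] [NormedSpace ℝ E]

def diametralBall (x y : E) : Set E := ball (((1 : ℝ) / 2) • (x + y)) (‖x - y‖ / 2)

lemma diametralBall_subset_compl_closedBall {x y : E} {ρ : ℝ}
    (h : ‖x - y‖ + 2 * ρ ≤ ‖x + y‖) : diametralBall x y ⊆ (closedBall 0 ρ)ᶜ := by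
  intro z hz
  rw [diametralBall, mem_ball, dist_eq_norm] at hz
  have hc : ‖((1 : ℝ) / 2) • (x + y)‖ = ‖x + y‖ / 2 := by
    rw [norm_smul]; norm_num; ring
  have := norm_sub_norm_le (((1 : ℝ) / 2) • (x + y)) z
  rw [norm_sub_rev] at this
  simp only [Set.mem_compl_iff, mem_closedBall, dist_zero_right, not_le]
  linarith

lemma two_mul_norm_le_norm_add_add_norm_sub (x y : E) : 2 * ‖x‖ ≤ ‖x + y‖ + ‖x - y‖ := by
  have h : (x + y) + (x - y) = (2 : ℝ) • x := by module
  have := norm_add_le (x + y) (x - y)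
  rwa [h, norm_smul, Real.norm_two] at this

section Chain

variable {u : E → ℝ} {M ε ρ α : ℝ}

lemma exists_norm_le_abs_sub_le (hρ : 0 ≤ ρ) (hε : 0 ≤ ε) (hα : 0 ≤ α)
    (hoff : ∀ a b : E, ‖a - b‖ + 2 * ρ ≤ ‖a + b‖ → |u a - u b| ≤ ε * ‖a - b‖ ^ α) (x : E) :
    ∃ c, ‖c‖ ≤ ρ ∧ |u x - u c| ≤ ε * ‖x‖ ^ α := by
  by_cases hx : ‖x‖ ≤ ρ
  · exact ⟨x, hx, by simp only [sub_self, abs_zero]; positivity⟩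
  replace hx := not_le.1 hx
  have hx0 : 0 < ‖x‖ := hρ.trans_lt hx
  have hnorm : ∀ t : ℝ, 0 ≤ t → ‖t • x‖ = t * ‖x‖ := fun t ht => by
    rw [norm_smul, Real.norm_of_nonneg ht]
  have hsub : x - (ρ / ‖x‖) • x = (1 - ρ / ‖x‖) • x := by module
  have hadd : x + (ρ / ‖x‖) • x = (1 + ρ / ‖x‖) • x := by module
  have hq : ρ / ‖x‖ ≤ 1 := (div_le_one hx0).2 hx.le
  have hq0 : 0 ≤ ρ / ‖x‖ := by positivity
  refine ⟨(ρ / ‖x‖) • x, ?_, (hoff _ _ ?_).trans ?_⟩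
  · rw [hnorm _ hq0, div_mul_cancel₀ _ hx0.ne']
  · rw [hsub, hadd, hnorm _ (by linarith), hnorm _ (by linarith)]
    nlinarith [div_mul_cancel₀ ρ hx0.ne']
  · rw [hsub, hnorm _ (by linarith)]
    gcongr
    nlinarith

lemma abs_sub_le_of_le_norm_sub (hM : 0 ≤ M) (hρ : 0 ≤ ρ) (hε : 0 ≤ ε) (hα : 0 ≤ α)
    (hglob : ∀ a b : E, |u a - u b| ≤ M * ‖a - b‖ ^ α)
    (hoff : ∀ a b : E, ‖a - b‖ + 2 * ρ ≤ ‖a + b‖ → |u a - u b| ≤ ε * ‖a - b‖ ^ α)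
    {x y : E} (h : ρ ≤ ‖x - y‖) :
    |u x - u y| ≤ 2 * ε * (2 * ‖x - y‖) ^ α + M * (2 * ρ) ^ α := by
  have hRα : ‖x - y‖ ^ α ≤ (2 * ‖x - y‖) ^ α := by gcongr; linarith [norm_nonneg (x - y)]
  have hMρ : 0 ≤ M * (2 * ρ) ^ α := by positivity
  rcases le_or_gt (‖x - y‖ + 2 * ρ) ‖x + y‖ with hfar | hnear
  · have hε' : ε * ‖x - y‖ ^ α ≤ ε * (2 * ‖x - y‖) ^ α := by gcongr
    have : 0 ≤ ε * (2 * ‖x - y‖) ^ α := by positivity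
    linarith [hoff x y hfar]
  have hx := two_mul_norm_le_norm_add_add_norm_sub x y
  have hy := two_mul_norm_le_norm_add_add_norm_sub y x
  rw [add_comm y, norm_sub_rev y] at hy
  obtain ⟨cx, hcx, hux⟩ := exists_norm_le_abs_sub_le hρ hε hα hoff x
  obtain ⟨cy, hcy, huy⟩ := exists_norm_le_abs_sub_le hρ hε hα hoff y
  have hxα : ε * ‖x‖ ^ α ≤ ε * (2 * ‖x - y‖) ^ α := by gcongr; linarith
  have hyα : ε * ‖y‖ ^ α ≤ ε * (2 * ‖x - y‖) ^ α := by gcongr; linarith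
  have hc : |u cx - u cy| ≤ M * (2 * ρ) ^ α := by
    refine (hglob cx cy).trans ?_
    gcongr
    linarith [norm_sub_le cx cy]
  calc |u x - u y| ≤ |u x - u cx| + (|u cx - u cy| + |u cy - u y|) :=
        (abs_sub_le _ _ _).trans (add_le_add_right (abs_sub_le _ _ _) _)
    _ ≤ _ := by rw [abs_sub_comm (u cy)]; linarith

lemma exists_abs_sub_le_of_le_norm_sub (hM : 0 ≤ M) (hρ : 0 ≤ ρ) (hα : 0 < α) {β : ℝ}
    (hβ : 0 < β) (hglob : ∀ a b : E, |u a - u b| ≤ M * ‖a - b‖ ^ α)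
    (hoff : ∀ a b : E, ‖a - b‖ + 2 * ρ ≤ ‖a + b‖ →
      |u a - u b| ≤ β / (4 * 2 ^ α) * ‖a - b‖ ^ α) :
    ∃ R, ∀ x y : E, R ≤ ‖x - y‖ → |u x - u y| ≤ β * ‖x - y‖ ^ α := by
  obtain ⟨R, hR⟩ := eventually_atTop.1 <| (eventually_ge_atTop ρ).and
    ((tendsto_rpow_atTop hα).eventually_ge_atTop (2 * M * (2 * ρ) ^ α / β))
  refine ⟨R, fun x y hxy => ?_⟩
  obtain ⟨hρx, hMx⟩ := hR _ hxy
  have h2α : 0 < (2 : ℝ) ^ α := by positivity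
  refine (abs_sub_le_of_le_norm_sub hM hρ (by positivity) hα.le hglob hoff hρx).trans ?_
  rw [div_le_iff₀ hβ] at hMx
  rw [Real.mul_rpow zero_le_two (norm_nonneg _)]
  field_simp
  nlinarith

end Chain

lemma exists_setIntegral_compl_closedBall_le {X : Type*} [PseudoMetricSpace X]
    [MeasurableSpace X] [OpensMeasurableSpace X] {μ : Measure X} {g : X → ℝ} (hg : Integrable g μ)
    (c : X) {κ : ℝ} (hκ : 0 < κ) : ∃ ρ ≥ 0, ∫ z in (closedBall c ρ)ᶜ, g z ∂μ ≤ κ := by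
  have h := tendsto_setIntegral_of_antitone (μ := μ) (f := g)
    (s := fun r : ℝ => (closedBall c r)ᶜ) (fun _ => measurableSet_closedBall.compl)
    (fun _ _ hrs => Set.compl_subset_compl.2 (closedBall_subset_closedBall hrs))
    ⟨0, hg.integrableOn⟩
  have hempty : ⋂ r : ℝ, (closedBall c r)ᶜ = ∅ :=
    Set.iInter_eq_empty_iff.2 fun z => ⟨dist z c, by simp⟩
  rw [hempty, Measure.restrict_empty, integral_zero_measure] at h
  exact ((eventually_ge_atTop 0).and (h.eventually (eventually_le_nhds hκ))).exists

section Energy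

variable [MeasurableSpace E] [BorelSpace E] {μ : Measure E} {g : E → ℝ} {κ : ℝ}

lemma exists_setIntegral_diametralBall_le_of_norm_sub_add_le (hg0 : 0 ≤ g)
    (hg : Integrable g μ) (hκ : 0 < κ) : ∃ ρ ≥ 0, ∀ x y : E, ‖x - y‖ + 2 * ρ ≤ ‖x + y‖ →
      ∫ z in diametralBall x y, g z ∂μ ≤ κ := by
  obtain ⟨ρ, hρ, htail⟩ := exists_setIntegral_compl_closedBall_le hg 0 hκ
  exact ⟨ρ, hρ, fun x y h => (setIntegral_mono_set hg.integrableOn (ae_of_all _ hg0)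
    (diametralBall_subset_compl_closedBall h).eventuallyLE).trans htail⟩

variable [FiniteDimensional ℝ E] [μ.IsAddHaarMeasure] [Nontrivial E]

lemma tendsto_measure_ball_zero : Tendsto (fun r => μ (ball (0 : E) r)) (𝓝 0) (𝓝 0) := by
  have h := tendsto_measure_cthickening_of_isCompact (μ := μ) (isCompact_singleton (x := (0 : E)))
  rw [measure_singleton] at h
  refine tendsto_of_tendsto_of_tendsto_of_le_of_le tendsto_const_nhds h (fun _ => zero_le)
    fun r => ?_
  rw [← thickening_singleton]
  exact measure_mono (thickening_subset_cthickening _ _)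

lemma exists_pos_setIntegral_diametralBall_le_of_norm_sub_le (hg : Integrable g μ)
    (hκ : 0 < κ) :
    ∃ r > 0, ∀ x y : E, ‖x - y‖ ≤ r → ∫ z in diametralBall x y, g z ∂μ ≤ κ := by
  set d : E × E → ℝ := fun z => ‖z.1 - z.2‖ / 2
  have hμ : Tendsto (μ ∘ fun z : E × E => diametralBall z.1 z.2) (comap d (𝓝 0)) (𝓝 0) := by
    have : (μ ∘ fun z : E × E => diametralBall z.1 z.2) = (fun r => μ (ball 0 r)) ∘ d :=
      funext fun z => Measure.addHaar_ball_center μ _ _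
    rw [this]
    exact tendsto_measure_ball_zero.comp tendsto_comap
  have h := (hg.tendsto_setIntegral_nhds_zero hμ).eventually (eventually_le_nhds hκ)
  obtain ⟨r, hr, hball⟩ := Metric.eventually_nhds_iff.1 (eventually_comap.1 h)
  refine ⟨r, hr, fun x y hxy => hball ?_ (x, y) rfl⟩
  rw [Real.dist_0_eq_abs, abs_of_nonneg (by positivity)]
  change ‖x - y‖ / 2 < r
  linarith

end Energy

section Morrey

variable [MeasurableSpace E] [BorelSpace E] {μ : Measure E} {g : E → ℝ} {u : E → ℝ}
  {C p α : ℝ}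

lemma setIntegral_diametralBall_nonneg (hg0 : 0 ≤ g) (x y : E) :
    0 ≤ ∫ z in diametralBall x y, g z ∂μ :=
  setIntegral_nonneg measurableSet_ball fun z _ => hg0 z

lemma abs_sub_le_of_setIntegral_diametralBall_le (hC : 0 < C) (hp : 0 < p) (hg0 : 0 ≤ g)
    (hM : ∀ x y : E, |u x - u y| ≤
      C * ‖x - y‖ ^ α * (∫ z in diametralBall x y, g z ∂μ) ^ (1 / p))
    {β : ℝ} (hβ : 0 ≤ β) {x y : E}
    (h : ∫ z in diametralBall x y, g z ∂μ ≤ (β / C) ^ p) : |u x - u y| ≤ β * ‖x - y‖ ^ α := by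
  have hI : (∫ z in diametralBall x y, g z ∂μ) ^ (1 / p) ≤ β / C := by
    calc _ ≤ ((β / C) ^ p) ^ (1 / p) :=
          Real.rpow_le_rpow (setIntegral_diametralBall_nonneg hg0 x y) h (by positivity)
      _ = β / C := by rw [one_div, Real.rpow_rpow_inv (by positivity) hp.ne']
  calc |u x - u y| ≤ C * ‖x - y‖ ^ α * (β / C) := (hM x y).trans (by gcongr)
    _ = β * ‖x - y‖ ^ α := by field_simp

lemma abs_sub_le_mul_rpow_of_integrable (hC : 0 < C) (hp : 0 < p) (hg0 : 0 ≤ g)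
    (hg : Integrable g μ)
    (hM : ∀ x y : E, |u x - u y| ≤
      C * ‖x - y‖ ^ α * (∫ z in diametralBall x y, g z ∂μ) ^ (1 / p)) (x y : E) :
    |u x - u y| ≤ C * (∫ z, g z ∂μ) ^ (1 / p) * ‖x - y‖ ^ α := by
  calc |u x - u y| ≤ C * ‖x - y‖ ^ α * (∫ z in diametralBall x y, g z ∂μ) ^ (1 / p) := hM x y
    _ ≤ C * ‖x - y‖ ^ α * (∫ z, g z ∂μ) ^ (1 / p) := by
      have h0 := setIntegral_diametralBall_nonneg (μ := μ) hg0 x y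
      have hI := setIntegral_le_integral (s := diametralBall x y) hg (ae_of_all _ hg0)
      gcongr
    _ = C * (∫ z, g z ∂μ) ^ (1 / p) * ‖x - y‖ ^ α := by ring

end Morrey

theorem exists_pos_abs_sub_le_mul_rpow_of_morrey [MeasurableSpace E] [BorelSpace E]
    [FiniteDimensional ℝ E] [Nontrivial E] {μ : Measure E} [μ.IsAddHaarMeasure] {g u : E → ℝ}
    {C p α : ℝ} (hC : 0 < C) (hp : 0 < p) (hα : 0 < α) (hg0 : 0 ≤ g) (hg : Integrable g μ)
    (hM : ∀ x y : E, |u x - u y| ≤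
      C * ‖x - y‖ ^ α * (∫ z in diametralBall x y, g z ∂μ) ^ (1 / p))
    {β : ℝ} (hβ : 0 < β) : ∃ r > 0, ∃ R, ∀ x y : E, (‖x - y‖ ≤ r ∨ R ≤ ‖x - y‖ ∨ R ≤ ‖x‖) →
      |u x - u y| ≤ β * ‖x - y‖ ^ α := by
  set ε := β / (4 * 2 ^ α)
  have hε : 0 < ε := by positivity
  have hεβ : ε ≤ β :=
    div_le_self hβ.le (by nlinarith [Real.one_le_rpow one_le_two hα.le])
  obtain ⟨r, hr, hnear⟩ :=
    exists_pos_setIntegral_diametralBall_le_of_norm_sub_le hg (κ := (β / C) ^ p) (by positivity)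
  obtain ⟨ρ, hρ, hoffE⟩ := exists_setIntegral_diametralBall_le_of_norm_sub_add_le hg0 hg
    (κ := (ε / C) ^ p) (Real.rpow_pos_of_pos (div_pos hε hC) _)
  have hoff : ∀ a b : E, ‖a - b‖ + 2 * ρ ≤ ‖a + b‖ → |u a - u b| ≤ ε * ‖a - b‖ ^ α :=
    fun a b h => abs_sub_le_of_setIntegral_diametralBall_le hC hp hg0 hM hε.le (hoffE a b h)
  obtain ⟨R, hfar⟩ := exists_abs_sub_le_of_le_norm_sub
    (mul_nonneg hC.le (Real.rpow_nonneg (integral_nonneg hg0) _)) hρ hα hβ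
    (abs_sub_le_mul_rpow_of_integrable hC hp hg0 hg hM) hoff
  refine ⟨r, hr, R + ρ, fun x y hxy => ?_⟩
  rcases le_or_gt R ‖x - y‖ with hR | hR
  · exact hfar x y hR
  rcases hxy with hxy | hxy | hxy
  · exact abs_sub_le_of_setIntegral_diametralBall_le hC hp hg0 hM hβ.le (hnear x y hxy)
  · linarith
  · -- `‖x‖ ≥ R + ρ > ‖x - y‖ + ρ` puts the diametral ball outside `closedBall 0 ρ`
    have := two_mul_norm_le_norm_add_add_norm_sub x y
    calc |u x - u y| ≤ ε * ‖x - y‖ ^ α := hoff x y (by linarith)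
      _ ≤ β * ‖x - y‖ ^ α := by gcongr

theorem holder_ratio_maximized_general (n : ℕ) (p : ℝ) (hp : (n : ℝ) < p)
    (C : ℝ) (hC : 0 < C)
    (u : EuclideanSpace ℝ (Fin n) → ℝ)
    (hnc : ∃ a b : EuclideanSpace ℝ (Fin n), u a ≠ u b)
    (hui : Integrable (fun x => ‖gradient u x‖ ^ p))
    (hM : ∀ x y : EuclideanSpace ℝ (Fin n),
      |u x - u y| ≤ C * ‖x - y‖ ^ (1 - (n : ℝ) / p) *
        (∫ z in Metric.ball (((1 : ℝ) / 2) • (x + y)) (‖x - y‖ / 2),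
          ‖gradient u z‖ ^ p) ^ (1 / p)) :
    ∃ x0 y0 : EuclideanSpace ℝ (Fin n), x0 ≠ y0 ∧
      ∀ x y : EuclideanSpace ℝ (Fin n), x ≠ y →
        |u x - u y| / ‖x - y‖ ^ (1 - (n : ℝ) / p) ≤
          |u x0 - u y0| / ‖x0 - y0‖ ^ (1 - (n : ℝ) / p) := by
  obtain ⟨a, b, hab⟩ := hnc
  have : Nontrivial (EuclideanSpace ℝ (Fin n)) := nontrivial_of_ne a b (ne_of_apply_ne u hab)
  have hp0 : 0 < p := lt_of_le_of_lt n.cast_nonneg hp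
  have hα : 0 < 1 - (n : ℝ) / p := sub_pos.2 ((div_lt_one hp0).2 hp)
  have hg0 : 0 ≤ fun x => ‖gradient u x‖ ^ p := fun x => by positivity
  obtain ⟨x0, y0, hne, hmax⟩ := exists_ne_forall_holderRatio_le
    (continuous_of_abs_sub_le_mul_rpow hα (abs_sub_le_mul_rpow_of_integrable hC hp0 hg0 hui hM))
    hα ⟨a, b, hab⟩
    fun β hβ => exists_pos_abs_sub_le_mul_rpow_of_morrey hC hp0 hα hg0 hui hM hβ
  exact ⟨x0, y0, hne, fun x y _ => hmax x y⟩

/-- The `(1 - n/p)`-Hölder ratio of a nonconstant function with `p`-integrable gradient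
satisfying the localized Morrey estimate attains its supremum at a pair of distinct
points. -/
theorem holder_ratio_maximized (n : ℕ) (hn : 2 ≤ n) (p : ℝ) (hp : (n : ℝ) < p)
    (C : ℝ) (hC : 0 < C)
    (u : EuclideanSpace ℝ (Fin n) → ℝ) (hu : Differentiable ℝ u)
    (hnc : ∃ a b : EuclideanSpace ℝ (Fin n), u a ≠ u b)
    (hui : Integrable (fun x => ‖gradient u x‖ ^ p))
    (hM : ∀ x y : EuclideanSpace ℝ (Fin n),
      |u x - u y| ≤ C * ‖x - y‖ ^ (1 - (n : ℝ) / p) *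
        (∫ z in Metric.ball (((1 : ℝ) / 2) • (x + y)) (‖x - y‖ / 2),
          ‖gradient u z‖ ^ p) ^ (1 / p)) :
    ∃ x0 y0 : EuclideanSpace ℝ (Fin n), x0 ≠ y0 ∧
      ∀ x y : EuclideanSpace ℝ (Fin n), x ≠ y →
        |u x - u y| / ‖x - y‖ ^ (1 - (n : ℝ) / p) ≤
          |u x0 - u y0| / ‖x0 - y0‖ ^ (1 - (n : ℝ) / p) :=
  holder_ratio_maximized_general n p hp C hC u hnc hui hM
end
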